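/- arXiv:2210.13962 — 4 statements merged into one kernel-verified Lean document; each statement's English description precedes it below -/
import Mathlib

section
/- Let m ≥ 1, u ∈ ℝ^{2m}, and define ω_ℓ = e^{u_ℓ+⋯+u_{2m}} − e^{u_{ℓ+1}+⋯+u_{2m}} for ℓ < 2m and ω_{2m} = e^{u_{2m}} − 1. Suppose t₁ > t₂ > … > t_m ≥ 0 and 0 ≤ t_{m+1} < … < t_{2m}, and fix b > 0, 0 < ρ₁ < ρ₂. Define φ₁(x) = 1 + Σ_{ℓ=1}^{m} ω_ℓ e^{−(t_ℓ/b)(x − bρ₁^{2b})} + Σ_{ℓ=m+1}^{2m} ω_ℓ and φ₂(x) = 1 − Σ_{ℓ=m+1}^{2m} ω_ℓ e^{−(t_ℓ/b)(bρ₂^{2b} − x)} + Σ_{ℓ=m+1}^{2m} ω_ℓ. Then for every x ∈ [bρ₁^{2b}, bρ₂^{2b}], φ₁(x) > 0 and φ₂(x) > 0. -/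
open Finset Real

private lemma abel_lb (E f : ℕ → ℝ) (hE : ∀ ℓ, 0 < E ℓ) (a c : ℕ) (hac : a ≤ c)
    (hf : ∀ ℓ, a ≤ ℓ → ℓ < c → f ℓ ≤ f (ℓ + 1)) :
    E a * f a - E (c + 1) * f c ≤ ∑ ℓ ∈ Finset.Icc a c, (E ℓ - E (ℓ + 1)) * f ℓ := by
  induction c, hac using Nat.le_induction with
  | base =>
    rw [Finset.Icc_self, Finset.sum_singleton]
    ring_nf
    exact le_refl _
  | succ c hac ih =>
    rw [Finset.sum_Icc_succ_top (by omega)]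
    have h1 := ih (fun ℓ hℓ h => hf ℓ hℓ (by omega))
    have h2 : f c ≤ f (c + 1) := hf c hac (by omega)
    nlinarith [mul_nonneg (hE (c + 1)).le (sub_nonneg.mpr h2)]

private lemma abel_ub (E f : ℕ → ℝ) (hE : ∀ ℓ, 0 < E ℓ) (a c : ℕ) (hac : a ≤ c)
    (hf : ∀ ℓ, a ≤ ℓ → ℓ < c → f (ℓ + 1) ≤ f ℓ) :
    ∑ ℓ ∈ Finset.Icc a c, (E ℓ - E (ℓ + 1)) * f ℓ ≤ E a * f a - E (c + 1) * f c := by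
  induction c, hac using Nat.le_induction with
  | base =>
    rw [Finset.Icc_self, Finset.sum_singleton]
    ring_nf
    exact le_refl _
  | succ c hac ih =>
    rw [Finset.sum_Icc_succ_top (by omega)]
    have h1 := ih (fun ℓ hℓ h => hf ℓ hℓ (by omega))
    have h2 : f (c + 1) ≤ f c := hf c hac (by omega)
    nlinarith [mul_nonneg (hE (c + 1)).le (sub_nonneg.mpr h2)]

private lemma tele (E : ℕ → ℝ) (a c : ℕ) (hac : a ≤ c) :
    ∑ ℓ ∈ Finset.Icc a c, (E ℓ - E (ℓ + 1)) = E a - E (c + 1) := by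
  induction c, hac using Nat.le_induction with
  | base => rw [Finset.Icc_self, Finset.sum_singleton]
  | succ c hac ih =>
    rw [Finset.sum_Icc_succ_top (by omega), ih]
    ring

theorem phi_pos
    (m : ℕ) (hm : 1 ≤ m) (u t : ℕ → ℝ) (b ρ₁ ρ₂ : ℝ)
    (hb : 0 < b) (h1 : 0 < ρ₁) (h12 : ρ₁ < ρ₂)
    (ht1 : ∀ i j, 1 ≤ i → i < j → j ≤ m → t j < t i)
    (ht1' : 0 ≤ t m)
    (ht2 : ∀ i j, m + 1 ≤ i → i < j → j ≤ 2 * m → t i < t j)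
    (ht2' : 0 ≤ t (m + 1))
    (ω : ℕ → ℝ)
    (hω : ∀ ℓ, ω ℓ = Real.exp (∑ i ∈ Finset.Icc ℓ (2 * m), u i)
      - Real.exp (∑ i ∈ Finset.Icc (ℓ + 1) (2 * m), u i))
    (x : ℝ) (hx : x ∈ Set.Icc (b * ρ₁ ^ (2 * b)) (b * ρ₂ ^ (2 * b))) :
    0 < 1 + (∑ ℓ ∈ Finset.Icc 1 m,
        ω ℓ * Real.exp (-(t ℓ / b) * (x - b * ρ₁ ^ (2 * b))))
      + ∑ ℓ ∈ Finset.Icc (m + 1) (2 * m), ω ℓ ∧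
    0 < 1 - (∑ ℓ ∈ Finset.Icc (m + 1) (2 * m),
        ω ℓ * Real.exp (-(t ℓ / b) * (b * ρ₂ ^ (2 * b) - x)))
      + ∑ ℓ ∈ Finset.Icc (m + 1) (2 * m), ω ℓ := by
  set E : ℕ → ℝ := fun ℓ => Real.exp (∑ i ∈ Finset.Icc ℓ (2 * m), u i) with hEdef
  have hE : ∀ ℓ, 0 < E ℓ := fun ℓ => Real.exp_pos _
  have hωE : ∀ ℓ, ω ℓ = E ℓ - E (ℓ + 1) := fun ℓ => hω ℓ
  have hE2m1 : E (2 * m + 1) = 1 := by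
    simp [hEdef, Finset.Icc_eq_empty (by omega : ¬ 2 * m + 1 ≤ 2 * m)]
  have hm2 : m + 1 ≤ 2 * m := by omega
  have htele : ∑ ℓ ∈ Finset.Icc (m + 1) (2 * m), ω ℓ = E (m + 1) - 1 := by
    rw [Finset.sum_congr rfl (fun ℓ _ => hωE ℓ), tele E (m + 1) (2 * m) hm2, hE2m1]
  have hD1 : 0 ≤ x - b * ρ₁ ^ (2 * b) := by linarith [hx.1]
  have hD2 : 0 ≤ b * ρ₂ ^ (2 * b) - x := by linarith [hx.2]
  constructor
  · set f : ℕ → ℝ := fun ℓ => Real.exp (-(t ℓ / b) * (x - b * ρ₁ ^ (2 * b))) with hfdef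
    have hfmono : ∀ ℓ, 1 ≤ ℓ → ℓ < m → f ℓ ≤ f (ℓ + 1) := by
      intro ℓ h1ℓ hℓm
      apply Real.exp_le_exp.mpr
      have ht := ht1 ℓ (ℓ + 1) h1ℓ (by omega) (by omega)
      have : t (ℓ + 1) / b ≤ t ℓ / b := by gcongr
      nlinarith
    have lb := abel_lb E f hE 1 m hm hfmono
    have hsum : ∑ ℓ ∈ Finset.Icc 1 m, ω ℓ * Real.exp (-(t ℓ / b) * (x - b * ρ₁ ^ (2 * b)))
        = ∑ ℓ ∈ Finset.Icc 1 m, (E ℓ - E (ℓ + 1)) * f ℓ :=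
      Finset.sum_congr rfl (fun ℓ _ => by rw [hωE ℓ])
    rw [hsum, htele]
    have hfm : f m ≤ 1 := by
      apply Real.exp_le_one_iff.mpr
      have : 0 ≤ t m / b := div_nonneg ht1' hb.le
      nlinarith
    have hf1 : 0 < f 1 := Real.exp_pos _
    nlinarith [hE 1, hE (m + 1)]
  · set g : ℕ → ℝ := fun ℓ => Real.exp (-(t ℓ / b) * (b * ρ₂ ^ (2 * b) - x)) with hgdef
    have hgmono : ∀ ℓ, m + 1 ≤ ℓ → ℓ < 2 * m → g (ℓ + 1) ≤ g ℓ := by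
      intro ℓ h1ℓ hℓm
      apply Real.exp_le_exp.mpr
      have ht := ht2 ℓ (ℓ + 1) h1ℓ (by omega) (by omega)
      have : t ℓ / b ≤ t (ℓ + 1) / b := by gcongr
      nlinarith
    have ub := abel_ub E g hE (m + 1) (2 * m) hm2 hgmono
    rw [hE2m1] at ub
    have hsum : ∑ ℓ ∈ Finset.Icc (m + 1) (2 * m),
          ω ℓ * Real.exp (-(t ℓ / b) * (b * ρ₂ ^ (2 * b) - x))
        = ∑ ℓ ∈ Finset.Icc (m + 1) (2 * m), (E ℓ - E (ℓ + 1)) * g ℓ :=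
      Finset.sum_congr rfl (fun ℓ _ => by rw [hωE ℓ])
    rw [hsum, htele]
    have hgm : g (m + 1) ≤ 1 := by
      apply Real.exp_le_one_iff.mpr
      have : 0 ≤ t (m + 1) / b := div_nonneg ht2' hb.le
      nlinarith
    have hg2m : 0 < g (2 * m) := Real.exp_pos _
    nlinarith [hE (m + 1)]
end

section
/- Jacobi triple product: for τ with Im τ > 0 and z ∈ ℂ, Σ_{ℓ∈ℤ} e^{πiℓ²τ + 2πiℓz} = Π_{ℓ=1}^{∞} (1 − e^{2ℓπiτ})(1 + e^{(2ℓ−1)πiτ + 2πiz})(1 + e^{(2ℓ−1)πiτ − 2πiz}). -/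
open Complex Finset

noncomputable def poch (Q : ℂ) (k : ℕ) : ℂ := ∏ j ∈ Finset.range k, (1 - Q^(j+1))

lemma poch_zero (Q : ℂ) : poch Q 0 = 1 := by simp [poch]

lemma poch_succ (Q : ℂ) (k : ℕ) : poch Q (k+1) = poch Q k * (1 - Q^(k+1)) :=
  Finset.prod_range_succ _ _

lemma one_sub_pow_ne_zero {Q : ℂ} (hQ : ‖Q‖ < 1) {k : ℕ} (hk : k ≠ 0) : 1 - Q^k ≠ 0 := by
  intro h
  have h1 : Q ^ k = 1 := by linear_combination -h
  have : ‖Q ^ k‖ < 1 := by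
    rw [norm_pow]; exact pow_lt_one₀ (norm_nonneg Q) hQ hk
  rw [h1, norm_one] at this; exact lt_irrefl _ this

lemma poch_ne_zero {Q : ℂ} (hQ : ‖Q‖ < 1) (k : ℕ) : poch Q k ≠ 0 :=
  Finset.prod_ne_zero_iff.mpr fun j _ => one_sub_pow_ne_zero hQ (Nat.succ_ne_zero j)

lemma key_interior (Q A B P pa pb : ℂ) (hpa : pa ≠ 0) (hpb : pb ≠ 0)
    (h1 : 1 - A ≠ 0) (h2 : 1 - B ≠ 0) (h3 : 1-Q*A ≠ 0) (h4 : 1-Q*B ≠ 0) :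
    P*(1-Q*A*B)*(1-Q^2*A*B) / ((pa*(1-A)*(1-Q*A)) * (pb*(1-B)*(1-Q*B)))
      = (1+Q*A*B) * (P / ((pa*(1-A)) * (pb*(1-B))))
        + (Q*B) * (P / (pa * (pb*(1-B)*(1-Q*B))))
        + (Q*A) * (P / ((pa*(1-A)*(1-Q*A)) * pb)) := by
  have hD : (pa*(1-A)*(1-Q*A)) * (pb*(1-B)*(1-Q*B)) ≠ 0 := by
    apply mul_ne_zero <;> apply mul_ne_zero <;>
      first | assumption | (apply mul_ne_zero) <;> assumption
  have e1 : (1+Q*A*B) * (P / ((pa*(1-A)) * (pb*(1-B))))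
      = ((1+Q*A*B)*(1-Q*A)*(1-Q*B)*P) / ((pa*(1-A)*(1-Q*A)) * (pb*(1-B)*(1-Q*B))) := by
    rw [← mul_div_assoc,
      div_eq_div_iff (by apply mul_ne_zero <;> apply mul_ne_zero <;> assumption) hD]
    ring
  have e2 : (Q*B) * (P / (pa * (pb*(1-B)*(1-Q*B))))
      = ((Q*B)*(1-A)*(1-Q*A)*P) / ((pa*(1-A)*(1-Q*A)) * (pb*(1-B)*(1-Q*B))) := by
    rw [← mul_div_assoc, div_eq_div_iff (by
      refine mul_ne_zero hpa (mul_ne_zero (mul_ne_zero hpb h2) h4)) hD]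
    ring
  have e3 : (Q*A) * (P / ((pa*(1-A)*(1-Q*A)) * pb))
      = ((Q*A)*(1-B)*(1-Q*B)*P) / ((pa*(1-A)*(1-Q*A)) * (pb*(1-B)*(1-Q*B))) := by
    rw [← mul_div_assoc, div_eq_div_iff (by
      refine mul_ne_zero (mul_ne_zero (mul_ne_zero hpa h1) h3) hpb) hD]
    ring
  rw [e1, e2, e3, ← add_div, ← add_div, div_eq_div_iff hD hD]
  ring

lemma key_edge_b (Q A P pa : ℂ) (hpa : pa ≠ 0) (h1 : 1 - A ≠ 0) (h3 : 1-Q*A ≠ 0)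
    (h5 : 1-Q ≠ 0) :
    P*(1-Q*A)*(1-Q^2*A) / ((pa*(1-A)*(1-Q*A)) * (1*(1-Q)))
      = (1+Q*A) * (P / ((pa*(1-A)) * 1)) + Q * (P / (pa * (1*(1-Q)))) + (Q*A) * 0 := by
  have hD : (pa*(1-A)*(1-Q*A)) * (1*(1-Q)) ≠ 0 :=
    mul_ne_zero (mul_ne_zero (mul_ne_zero hpa h1) h3) (mul_ne_zero one_ne_zero h5)
  have e1 : (1+Q*A) * (P / ((pa*(1-A)) * 1))
      = ((1+Q*A)*(1-Q*A)*(1-Q)*P) / ((pa*(1-A)*(1-Q*A)) * (1*(1-Q))) := by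
    rw [← mul_div_assoc, div_eq_div_iff (by
      refine mul_ne_zero (mul_ne_zero hpa h1) one_ne_zero) hD]
    ring
  have e2 : Q * (P / (pa * (1*(1-Q))))
      = (Q*(1-A)*(1-Q*A)*P) / ((pa*(1-A)*(1-Q*A)) * (1*(1-Q))) := by
    rw [← mul_div_assoc, div_eq_div_iff (by
      refine mul_ne_zero hpa (mul_ne_zero one_ne_zero h5)) hD]
    ring
  rw [e1, e2, mul_zero, add_zero, ← add_div, div_eq_div_iff hD hD]
  ring

lemma key_edge_a (Q B P pb : ℂ) (hpb : pb ≠ 0) (h2 : 1 - B ≠ 0) (h4 : 1-Q*B ≠ 0)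
    (h5 : 1-Q ≠ 0) :
    P*(1-Q*B)*(1-Q^2*B) / ((1*(1-Q)) * (pb*(1-B)*(1-Q*B)))
      = (1+Q*B) * (P / (1 * (pb*(1-B)))) + (Q*B) * 0 + Q * (P / ((1*(1-Q)) * pb)) := by
  have hD : ((1:ℂ)*(1-Q)) * (pb*(1-B)*(1-Q*B)) ≠ 0 :=
    mul_ne_zero (mul_ne_zero one_ne_zero h5) (mul_ne_zero (mul_ne_zero hpb h2) h4)
  have e1 : (1+Q*B) * (P / (1 * (pb*(1-B))))
      = ((1+Q*B)*(1-Q)*(1-Q*B)*P) / (((1:ℂ)*(1-Q)) * (pb*(1-B)*(1-Q*B))) := by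
    rw [← mul_div_assoc, div_eq_div_iff (by
      refine mul_ne_zero one_ne_zero (mul_ne_zero hpb h2)) hD]
    ring
  have e2 : Q * (P / ((1*(1-Q)) * pb))
      = (Q*(1-B)*(1-Q*B)*P) / (((1:ℂ)*(1-Q)) * (pb*(1-B)*(1-Q*B))) := by
    rw [← mul_div_assoc, div_eq_div_iff (by
      refine mul_ne_zero (mul_ne_zero one_ne_zero h5) hpb) hD]
    ring
  rw [e1, e2, mul_zero, add_zero, ← add_div, div_eq_div_iff hD hD]
  ring

lemma key_corner (Q P : ℂ) (h5 : 1-Q ≠ 0) :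
    P*(1-Q)*(1-Q^2) / ((1*(1-Q)) * (1*(1-Q)))
      = (1+Q) * (P / (1 * 1)) + Q * 0 + Q * 0 := by
  have hD : ((1:ℂ)*(1-Q)) * (1*(1-Q)) ≠ 0 :=
    mul_ne_zero (mul_ne_zero one_ne_zero h5) (mul_ne_zero one_ne_zero h5)
  rw [mul_zero, add_zero, add_zero, ← mul_div_assoc, div_eq_div_iff hD (by
    exact mul_ne_zero one_ne_zero one_ne_zero)]
  ring

/-- symmetric Gaussian binomial coefficient `[2N; N+ℓ]_Q` -/
noncomputable def cc (Q : ℂ) (N : ℕ) (ℓ : ℤ) : ℂ :=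
  if ℓ.natAbs ≤ N then poch Q (2*N) / (poch Q (N+ℓ).toNat * poch Q (N-ℓ).toNat) else 0

lemma cc_eq_zero (Q : ℂ) {N : ℕ} {ℓ : ℤ} (h : N < ℓ.natAbs) : cc Q N ℓ = 0 := by
  rw [cc, if_neg (by omega)]

lemma cc_eq (Q : ℂ) {N : ℕ} {ℓ : ℤ} {a b : ℕ} (ha : (N:ℤ)+ℓ = a) (hb : (N:ℤ)-ℓ = b) :
    cc Q N ℓ = poch Q (2*N) / (poch Q a * poch Q b) := by
  rw [cc, if_pos (by omega), show ((N:ℤ)+ℓ).toNat = a by omega,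
    show ((N:ℤ)-ℓ).toNat = b by omega]

lemma cc_rec {Q : ℂ} (hQ : ‖Q‖ < 1) (N : ℕ) (ℓ : ℤ) :
    cc Q (N+1) ℓ = (1 + Q^(2*N+1)) * cc Q N ℓ
      + Q^((N:ℤ)+1-ℓ) * cc Q N (ℓ-1) + Q^((N:ℤ)+1+ℓ) * cc Q N (ℓ+1) := by
  have h5 : (1:ℂ) - Q ≠ 0 := by
    have := one_sub_pow_ne_zero hQ (k := 1) one_ne_zero; rwa [pow_one] at this
  rcases le_or_gt ℓ.natAbs N with hl | hl
  · -- main case |ℓ| ≤ N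
    obtain ⟨a, ha⟩ : ∃ a : ℕ, (N:ℤ) + ℓ = a := ⟨(N+ℓ).toNat, by omega⟩
    obtain ⟨b, hb⟩ : ∃ b : ℕ, (N:ℤ) - ℓ = b := ⟨(N-ℓ).toNat, by omega⟩
    have hab : a + b = 2*N := by omega
    rw [cc_eq Q (N := N+1) (a := a+1) (b := b+1) (by push_cast; omega) (by push_cast; omega),
        cc_eq Q ha hb,
        show Q^((N:ℤ)+1-ℓ) = Q^(b+1) by
          rw [show (N:ℤ)+1-ℓ = ((b+1:ℕ):ℤ) by omega, zpow_natCast],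
        show Q^((N:ℤ)+1+ℓ) = Q^(a+1) by
          rw [show (N:ℤ)+1+ℓ = ((a+1:ℕ):ℤ) by omega, zpow_natCast]]
    have h2a : cc Q N (ℓ-1)
        = if a = 0 then 0 else poch Q (2*N) / (poch Q (a-1) * poch Q (b+1)) := by
      rcases Nat.eq_zero_or_pos a with h0 | h0
      · rw [if_pos h0, cc_eq_zero Q (by omega)]
      · rw [if_neg (by omega)]
        exact cc_eq Q (by omega) (by omega)
    have h2b : cc Q N (ℓ+1)
        = if b = 0 then 0 else poch Q (2*N) / (poch Q (a+1) * poch Q (b-1)) := by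
      rcases Nat.eq_zero_or_pos b with h0 | h0
      · rw [if_pos h0, cc_eq_zero Q (by omega)]
      · rw [if_neg (by omega)]
        exact cc_eq Q (by omega) (by omega)
    rw [h2a, h2b]
    have e2N2 : poch Q (2*(N+1)) = poch Q (2*N) * (1 - Q^(a+b+1)) * (1 - Q^(a+b+2)) := by
      rw [show 2*(N+1) = (2*N+1)+1 by ring, poch_succ, poch_succ, hab]
    rw [e2N2, show 2*N+1 = a+b+1 by omega]
    rcases Nat.eq_zero_or_pos a with ha0 | ha0
    · subst ha0
      rw [if_pos rfl]
      rcases Nat.eq_zero_or_pos b with hb0 | hb0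
      · -- a = b = 0
        subst hb0
        rw [if_pos rfl]
        simp only [poch_succ, poch_zero]
        rw [show Q^(0+0+1) = Q by ring, show Q^(0+0+2) = Q^2 by ring]
        exact key_corner Q _ h5
      · -- a = 0, b ≥ 1
        obtain ⟨b', rfl⟩ : ∃ b', b = b'+1 := ⟨b-1, by omega⟩
        rw [if_neg (by omega)]
        simp only [Nat.add_sub_cancel, poch_succ, poch_zero]
        rw [show Q^(0+(b'+1)+1) = Q*Q^(b'+1) by ring,
            show Q^(0+(b'+1)+2) = Q^2*Q^(b'+1) by ring,
            show Q^(b'+1+1) = Q*Q^(b'+1) by ring,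
            show Q^(0+1) = Q by ring]
        exact key_edge_a Q (Q^(b'+1)) _ (poch Q b') (poch_ne_zero hQ b')
          (one_sub_pow_ne_zero hQ (by omega))
          (by have := one_sub_pow_ne_zero hQ (k := b'+2) (by omega)
              rwa [show Q^(b'+2) = Q*Q^(b'+1) by ring] at this) h5
    · obtain ⟨a', rfl⟩ : ∃ a', a = a'+1 := ⟨a-1, by omega⟩
      rw [if_neg (by omega)]
      simp only [Nat.add_sub_cancel]
      rcases Nat.eq_zero_or_pos b with hb0 | hb0
      · -- b = 0, a ≥ 1
        subst hb0
        rw [if_pos rfl]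
        simp only [poch_succ, poch_zero]
        rw [show Q^(0+1) = Q by ring, show Q^(a'+1+0+1) = Q*Q^(a'+1) by ring,
            show Q^(a'+1+0+2) = Q^2*Q^(a'+1) by ring]
        exact key_edge_b Q (Q^(a'+1)) _ (poch Q a') (poch_ne_zero hQ a')
          (one_sub_pow_ne_zero hQ (by omega))
          (by have := one_sub_pow_ne_zero hQ (k := a'+2) (by omega)
              rwa [show Q^(a'+2) = Q*Q^(a'+1) by ring] at this) h5
      · -- interior
        obtain ⟨b', rfl⟩ : ∃ b', b = b'+1 := ⟨b-1, by omega⟩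
        rw [if_neg (by omega)]
        simp only [Nat.add_sub_cancel, poch_succ]
        rw [show Q^(a'+1+(b'+1)+1) = Q*Q^(a'+1)*Q^(b'+1) by ring,
            show Q^(a'+1+(b'+1)+2) = Q^2*Q^(a'+1)*Q^(b'+1) by ring,
            show Q^(a'+1+1) = Q*Q^(a'+1) by ring,
            show Q^(b'+1+1) = Q*Q^(b'+1) by ring]
        exact key_interior Q (Q^(a'+1)) (Q^(b'+1)) _ (poch Q a') (poch Q b')
          (poch_ne_zero hQ a') (poch_ne_zero hQ b')
          (one_sub_pow_ne_zero hQ (by omega)) (one_sub_pow_ne_zero hQ (by omega))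
          (by have := one_sub_pow_ne_zero hQ (k := a'+2) (by omega)
              rwa [show Q^(a'+2) = Q*Q^(a'+1) by ring] at this)
          (by have := one_sub_pow_ne_zero hQ (k := b'+2) (by omega)
              rwa [show Q^(b'+2) = Q*Q^(b'+1) by ring] at this)
  · -- |ℓ| ≥ N+1
    rcases le_or_gt ℓ.natAbs (N+1) with h2 | h2
    · -- |ℓ| = N+1
      rcases le_or_gt 0 ℓ with hpos | hneg
      · -- ℓ = N+1
        have hL : ℓ = (N:ℤ)+1 := by omega
        rw [cc_eq_zero Q hl, cc_eq Q (N := N+1) (a := 2*(N+1)) (b := 0)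
              (by push_cast; omega) (by push_cast; omega),
            cc_eq_zero Q (ℓ := ℓ+1) (by omega),
            cc_eq Q (ℓ := ℓ-1) (a := 2*N) (b := 0) (by omega) (by omega),
            show (N:ℤ)+1-ℓ = 0 by omega]
        simp only [poch_zero, zpow_zero, mul_one]
        rw [div_self (poch_ne_zero hQ _), div_self (poch_ne_zero hQ _)]
        ring
      · -- ℓ = -(N+1)
        have hL : ℓ = -((N:ℤ)+1) := by omega
        rw [cc_eq_zero Q hl, cc_eq Q (N := N+1) (a := 0) (b := 2*(N+1))
              (by push_cast; omega) (by push_cast; omega),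
            cc_eq_zero Q (ℓ := ℓ-1) (by omega),
            cc_eq Q (ℓ := ℓ+1) (a := 0) (b := 2*N) (by omega) (by omega),
            show (N:ℤ)+1+ℓ = 0 by omega]
        simp only [poch_zero, zpow_zero, one_mul]
        rw [div_self (poch_ne_zero hQ _), div_self (poch_ne_zero hQ _)]
        ring
    · -- |ℓ| > N+1
      rw [cc_eq_zero Q hl, cc_eq_zero Q (N := N+1) (by omega),
          cc_eq_zero Q (ℓ := ℓ-1) (by omega), cc_eq_zero Q (ℓ := ℓ+1) (by omega)]
      ring

lemma sum_shift (g : ℤ → ℂ) (a b c : ℤ) :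
    ∑ ℓ ∈ Finset.Icc a b, g (ℓ+c) = ∑ ℓ ∈ Finset.Icc (a+c) (b+c), g ℓ := by
  rw [← Finset.map_add_right_Icc, Finset.sum_map]
  simp [addRightEmbedding]

lemma sum_cc_ext {Q : ℂ} (N : ℕ) {s : Finset ℤ} (hs : Finset.Icc (-(N:ℤ)) N ⊆ s)
    (t : ℤ → ℂ) :
    ∑ ℓ ∈ s, cc Q N ℓ * t ℓ = ∑ ℓ ∈ Finset.Icc (-(N:ℤ)) N, cc Q N ℓ * t ℓ := by
  refine (Finset.sum_subset hs fun x _ hx => ?_).symm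
  rw [Finset.mem_Icc] at hx
  rw [cc_eq_zero Q (by omega), zero_mul]

lemma finite_jtp (q y : ℂ) (hq : ‖q‖ < 1) (hq0 : q ≠ 0) (hy : y ≠ 0) (N : ℕ) :
    ∏ j ∈ Finset.range N, ((1 + q^(2*j+1) * y) * (1 + q^(2*j+1) * y⁻¹))
      = ∑ ℓ ∈ Finset.Icc (-(N:ℤ)) N, cc (q^2) N ℓ * (q^(ℓ^2) * y^ℓ) := by
  have hQ : ‖q^2‖ < 1 := by
    rw [norm_pow]
    exact pow_lt_one₀ (norm_nonneg q) hq two_ne_zero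
  have hQzp : ∀ m : ℤ, (q^2 : ℂ)^m = q^(2*m) := fun m => by
    rw [← zpow_natCast q 2, ← zpow_mul]
    norm_num
  induction N with
  | zero => simp [cc, poch_zero]
  | succ N ih =>
    rw [Finset.prod_range_succ, ih]
    have hI : Finset.Icc (-((N+1:ℕ):ℤ)) ((N+1:ℕ):ℤ) = Finset.Icc (-(N:ℤ)-1) ((N:ℤ)+1) := by
      congr 1 <;> push_cast <;> ring
    rw [hI]
    -- expand each coefficient by the recurrence
    have expand : ∑ ℓ ∈ Finset.Icc (-(N:ℤ)-1) ((N:ℤ)+1), cc (q^2) (N+1) ℓ * (q^(ℓ^2) * y^ℓ)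
        = (∑ ℓ ∈ Finset.Icc (-(N:ℤ)-1) ((N:ℤ)+1),
            (1 + (q^2)^(2*N+1)) * (cc (q^2) N ℓ * (q^(ℓ^2) * y^ℓ)))
          + (∑ ℓ ∈ Finset.Icc (-(N:ℤ)-1) ((N:ℤ)+1),
            q^(2*N+1) * y * (cc (q^2) N (ℓ-1) * (q^((ℓ-1)^2) * y^(ℓ-1))))
          + (∑ ℓ ∈ Finset.Icc (-(N:ℤ)-1) ((N:ℤ)+1),
            q^(2*N+1) * y⁻¹ * (cc (q^2) N (ℓ+1) * (q^((ℓ+1)^2) * y^(ℓ+1)))) := by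
      rw [← Finset.sum_add_distrib, ← Finset.sum_add_distrib]
      refine Finset.sum_congr rfl fun ℓ _ => ?_
      rw [cc_rec hQ N ℓ]
      have e2 : y^ℓ = y * y^(ℓ-1) := by
        rw [← zpow_one_add₀ hy]; congr 1; ring
      have e3 : y^ℓ = y⁻¹ * y^(ℓ+1) := by
        rw [← zpow_neg_one, ← zpow_add₀ hy]; congr 1; ring
      have e1m : (q^2)^((N:ℤ)+1-ℓ) * q^(ℓ^2 : ℤ) = q^((2*N+1 : ℕ) : ℤ) * q^((ℓ-1)^2 : ℤ) := by
        rw [hQzp, ← zpow_add₀ hq0, ← zpow_add₀ hq0]; congr 1; push_cast; ring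
      have e1p : (q^2)^((N:ℤ)+1+ℓ) * q^(ℓ^2 : ℤ) = q^((2*N+1 : ℕ) : ℤ) * q^((ℓ+1)^2 : ℤ) := by
        rw [hQzp, ← zpow_add₀ hq0, ← zpow_add₀ hq0]; congr 1; push_cast; ring
      have hnp : (q : ℂ)^(2*N+1) = q^((2*N+1 : ℕ) : ℤ) := (zpow_natCast q (2*N+1)).symm
      calc ((1 + (q^2)^(2*N+1)) * cc (q^2) N ℓ + (q^2)^((N:ℤ)+1-ℓ) * cc (q^2) N (ℓ-1)
              + (q^2)^((N:ℤ)+1+ℓ) * cc (q^2) N (ℓ+1)) * (q^(ℓ^2) * y^ℓ)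
          = (1 + (q^2)^(2*N+1)) * (cc (q^2) N ℓ * (q^(ℓ^2) * y^ℓ))
            + cc (q^2) N (ℓ-1) * ((q^2)^((N:ℤ)+1-ℓ) * q^(ℓ^2:ℤ)) * y^ℓ
            + cc (q^2) N (ℓ+1) * ((q^2)^((N:ℤ)+1+ℓ) * q^(ℓ^2:ℤ)) * y^ℓ := by ring
        _ = _ := by
            rw [e1m, e1p]
            nth_rewrite 2 [e2]
            nth_rewrite 2 [e3]
            rw [hnp]
            ring
    rw [expand]
    have s1 : (∑ ℓ ∈ Finset.Icc (-(N:ℤ)-1) ((N:ℤ)+1),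
          (1 + (q^2)^(2*N+1)) * (cc (q^2) N ℓ * (q^(ℓ^2) * y^ℓ)))
        = (1 + (q^2)^(2*N+1)) * ∑ ℓ ∈ Finset.Icc (-(N:ℤ)) N, cc (q^2) N ℓ * (q^(ℓ^2) * y^ℓ) := by
      rw [← Finset.mul_sum]
      congr 1
      exact sum_cc_ext (Q := q^2) N (by intro x hx; rw [Finset.mem_Icc] at *; omega) _
    -- second sum: shift the index
    have s2 : (∑ ℓ ∈ Finset.Icc (-(N:ℤ)-1) ((N:ℤ)+1),
          q^(2*N+1) * y * (cc (q^2) N (ℓ-1) * (q^((ℓ-1)^2) * y^(ℓ-1))))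
        = q^(2*N+1) * y * ∑ ℓ ∈ Finset.Icc (-(N:ℤ)) N, cc (q^2) N ℓ * (q^(ℓ^2) * y^ℓ) := by
      rw [← Finset.mul_sum]
      congr 1
      have := sum_shift (fun ℓ => cc (q^2) N ℓ * (q^(ℓ^2) * y^ℓ)) (-(N:ℤ)-1) ((N:ℤ)+1) (-1)
      simp only [← sub_eq_add_neg] at this
      rw [this, sum_cc_ext (Q := q^2) N (by intro x hx; rw [Finset.mem_Icc] at *; omega)]
    have s3 : (∑ ℓ ∈ Finset.Icc (-(N:ℤ)-1) ((N:ℤ)+1),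
          q^(2*N+1) * y⁻¹ * (cc (q^2) N (ℓ+1) * (q^((ℓ+1)^2) * y^(ℓ+1))))
        = q^(2*N+1) * y⁻¹ * ∑ ℓ ∈ Finset.Icc (-(N:ℤ)) N, cc (q^2) N ℓ * (q^(ℓ^2) * y^ℓ) := by
      rw [← Finset.mul_sum]
      congr 1
      have := sum_shift (fun ℓ => cc (q^2) N ℓ * (q^(ℓ^2) * y^ℓ)) (-(N:ℤ)-1) ((N:ℤ)+1) 1
      rw [this, sum_cc_ext (Q := q^2) N (by intro x hx; rw [Finset.mem_Icc] at *; omega)]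
    rw [s1, s2, s3]
    have hQN : (q^2 : ℂ)^(2*N+1) = q^(2*N+1) * q^(2*N+1) := by
      rw [← pow_mul, ← pow_add]; congr 1; ring
    rw [hQN]
    field_simp
    ring

open Filter Topology

lemma hasProd_zero_of_eq_zero {g : ℕ → ℂ} (j₀ : ℕ) (h : g j₀ = 0) : HasProd g 0 := by
  have hev : ∀ᶠ s : Finset ℕ in atTop, (0:ℂ) = ∏ i ∈ s, g i := by
    filter_upwards [Filter.eventually_ge_atTop ({j₀} : Finset ℕ)] with s hs
    exact (Finset.prod_eq_zero (hs (Finset.mem_singleton_self j₀)) h).symm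
  exact Filter.Tendsto.congr' hev tendsto_const_nhds

lemma summable_log_of_summable_norm {h : ℕ → ℂ} (hs : Summable fun j => ‖h j - 1‖) :
    Summable fun j => Complex.log (h j) := by
  have h0 : Tendsto (fun j => ‖h j - 1‖) atTop (𝓝 0) := hs.tendsto_atTop_zero
  have hev : ∀ᶠ j in atTop, ‖h j - 1‖ < 1/2 :=
    h0.eventually (gt_mem_nhds (by norm_num : (0:ℝ) < 1/2))
  refine Summable.of_norm_bounded_eventually_nat (g := fun j => 3/2 * ‖h j - 1‖)
    (hs.mul_left _) ?_
  filter_upwards [hev] with j hj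
  have := Complex.norm_log_one_add_half_le_self (z := h j - 1) (by linarith)
  rwa [show (1 : ℂ) + (h j - 1) = h j by ring] at this

lemma hasProd_of_summable_log {h : ℕ → ℂ} (h0 : ∀ j, h j ≠ 0)
    (hs : Summable fun j => Complex.log (h j)) :
    HasProd h (Complex.exp (∑' j, Complex.log (h j))) := by
  have := hs.hasSum.cexp
  have hfe : (Complex.exp ∘ fun j => Complex.log (h j)) = h :=
    funext fun j => Complex.exp_log (h0 j)
  rwa [hfe] at this

lemma norm_triple_sub_one {a b c : ℂ} {ε Y Y' : ℝ} (hε : ε ≤ 1) (hε0 : 0 ≤ ε)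
    (ha : ‖a‖ ≤ ε) (hb : ‖b‖ ≤ ε*Y) (hc : ‖c‖ ≤ ε*Y') (hY : 0 ≤ Y) (hY' : 0 ≤ Y') :
    ‖(1+a)*(1+b)*(1+c) - 1‖ ≤ ε * (1 + 2*Y + 2*Y' + 2*(Y*Y')) := by
  have he : (1+a)*(1+b)*(1+c) - 1 = a + b + c + (a*b + a*c + b*c + a*b*c) := by ring
  have hna : 0 ≤ ‖a‖ := norm_nonneg a
  have hnb : 0 ≤ ‖b‖ := norm_nonneg b
  have hnc : 0 ≤ ‖c‖ := norm_nonneg c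
  have l1 : ‖a + b + c‖ ≤ ‖a‖ + ‖b‖ + ‖c‖ :=
    (norm_add_le _ _).trans (add_le_add (norm_add_le _ _) le_rfl)
  have l2 : ‖a*b + a*c + b*c + a*b*c‖ ≤ ‖a*b‖ + ‖a*c‖ + ‖b*c‖ + ‖a*b*c‖ := by
    refine (norm_add_le _ _).trans (add_le_add ?_ le_rfl)
    refine (norm_add_le _ _).trans (add_le_add ?_ le_rfl)
    exact norm_add_le _ _
  simp only [norm_mul] at l2
  have h1 : ‖(1+a)*(1+b)*(1+c) - 1‖
      ≤ ‖a‖ + ‖b‖ + ‖c‖ + (‖a‖*‖b‖ + ‖a‖*‖c‖ + ‖b‖*‖c‖ + ‖a‖*‖b‖*‖c‖) := by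
    rw [he]
    exact (norm_add_le _ _).trans (by linarith)
  have haa : ‖a‖ ≤ 1 := ha.trans hε
  have hab : ‖a‖*‖b‖ ≤ ε*Y := by nlinarith
  have hac : ‖a‖*‖c‖ ≤ ε*Y' := by nlinarith
  have hbc' : ‖b‖*‖c‖ ≤ (ε*Y)*(ε*Y') := mul_le_mul hb hc hnc (by positivity)
  have heps : ε*ε ≤ ε := by nlinarith
  have heps2 : ε*ε*(Y*Y') ≤ ε*(Y*Y') :=
    mul_le_mul_of_nonneg_right heps (mul_nonneg hY hY')
  have heq : ε*Y*(ε*Y') = ε*ε*(Y*Y') := by ring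
  have hbc : ‖b‖*‖c‖ ≤ ε*(Y*Y') := by linarith [hbc', heps2, heq.le]
  have habc : ‖a‖*‖b‖*‖c‖ ≤ ε*(Y*Y') := by
    have h2 : ‖a‖*(‖b‖*‖c‖) ≤ 1*(ε*(Y*Y')) :=
      mul_le_mul haa hbc (by positivity) (by norm_num)
    nlinarith [h2]
  nlinarith [h1]

lemma jtp_qy (q y : ℂ) (hq : ‖q‖ < 1) (hq0 : q ≠ 0) (hy : y ≠ 0)
    (hsum : Summable fun ℓ : ℤ => ‖(q^(ℓ^2) * y^ℓ : ℂ)‖) :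
    ∑' ℓ : ℤ, q^((ℓ:ℤ)^2) * y^ℓ
      = ∏' j : ℕ, ((1 - (q^2)^(j+1)) * (1 + q^(2*j+1)*y) * (1 + q^(2*j+1)*y⁻¹)) := by
  have hQ : ‖q^2‖ < 1 := by
    rw [norm_pow]; exact pow_lt_one₀ (norm_nonneg q) hq two_ne_zero
  -- the limit of the pochhammer products
  have hps : Summable fun j : ℕ => ‖(1 - (q^2)^(j+1)) - 1‖ := by
    refine Summable.congr (f := fun j : ℕ => ‖q^2‖^(j+1))
      (((summable_geometric_of_lt_one (norm_nonneg _) hQ).mul_right ‖q^2‖).congr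
        fun j => (pow_succ _ _).symm) fun j => ?_
    rw [show (1 - (q^2)^(j+1)) - 1 = -((q^2)^(j+1)) by ring, norm_neg]
    simp [norm_pow]
  have hlogp : Summable fun j : ℕ => Complex.log (1 - (q^2)^(j+1)) :=
    summable_log_of_summable_norm hps
  have hPprod : HasProd (fun j : ℕ => 1 - (q^2)^(j+1))
      (Complex.exp (∑' j, Complex.log (1 - (q^2)^(j+1)))) :=
    hasProd_of_summable_log (fun j => one_sub_pow_ne_zero hQ (Nat.succ_ne_zero j)) hlogp
  set PL : ℂ := Complex.exp (∑' j, Complex.log (1 - (q^2)^(j+1))) with hPLdef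
  have hPL0 : PL ≠ 0 := Complex.exp_ne_zero _
  have hpoch : Tendsto (fun k => poch (q^2) k) atTop (𝓝 PL) := hPprod.tendsto_prod_nat
  -- uniform bounds on the pochhammer products and inverses
  obtain ⟨B, hB⟩ : ∃ B : ℝ, ∀ k, ‖poch (q^2) k‖ ≤ B := by
    obtain ⟨B, hB⟩ := (hpoch.norm).bddAbove_range
    exact ⟨B, fun k => hB (Set.mem_range_self k)⟩
  obtain ⟨C, hC⟩ : ∃ C : ℝ, ∀ k, ‖(poch (q^2) k)⁻¹‖ ≤ C := by
    obtain ⟨C, hC⟩ := ((hpoch.inv₀ hPL0).norm).bddAbove_range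
    exact ⟨C, fun k => hC (Set.mem_range_self k)⟩
  have hB0 : 0 ≤ B := le_trans (norm_nonneg _) (hB 0)
  have hC0 : 0 ≤ C := le_trans (norm_nonneg _) (hC 0)
  -- partial products of g equal truncated sums
  have hfin : ∀ N : ℕ,
      ∏ j ∈ Finset.range N,
        ((1 - (q^2)^(j+1)) * (1 + q^(2*j+1)*y) * (1 + q^(2*j+1)*y⁻¹))
      = ∑' ℓ : ℤ, (poch (q^2) N * cc (q^2) N ℓ) * (q^(ℓ^2) * y^ℓ) := by
    intro N
    have h1 : (∑' ℓ : ℤ, (poch (q^2) N * cc (q^2) N ℓ) * (q^(ℓ^2) * y^ℓ))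
        = ∑ ℓ ∈ Finset.Icc (-(N:ℤ)) N, (poch (q^2) N * cc (q^2) N ℓ) * (q^(ℓ^2) * y^ℓ) := by
      refine tsum_eq_sum fun b hb => ?_
      rw [Finset.mem_Icc] at hb
      rw [cc_eq_zero (q^2) (by omega), mul_zero, zero_mul]
    have h2 : ∑ ℓ ∈ Finset.Icc (-(N:ℤ)) N, (poch (q^2) N * cc (q^2) N ℓ) * (q^(ℓ^2) * y^ℓ)
        = poch (q^2) N * ∑ ℓ ∈ Finset.Icc (-(N:ℤ)) N, cc (q^2) N ℓ * (q^(ℓ^2) * y^ℓ) := by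
      rw [Finset.mul_sum]
      exact Finset.sum_congr rfl fun _ _ => by ring
    have h3 : ∏ j ∈ Finset.range N,
          ((1 - (q^2)^(j+1)) * (1 + q^(2*j+1)*y) * (1 + q^(2*j+1)*y⁻¹))
        = poch (q^2) N * ∏ j ∈ Finset.range N, ((1 + q^(2*j+1)*y) * (1 + q^(2*j+1)*y⁻¹)) := by
      rw [poch, ← Finset.prod_mul_distrib]
      exact Finset.prod_congr rfl fun _ _ => by ring
    rw [h1, h2, h3, finite_jtp q y hq hq0 hy N]
  -- pointwise convergence of coefficients
  have hptw : ∀ ℓ : ℤ, Tendsto (fun N => (poch (q^2) N * cc (q^2) N ℓ) * (q^(ℓ^2) * y^ℓ))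
      atTop (𝓝 (q^(ℓ^2) * y^ℓ)) := by
    intro ℓ
    have h2N : Tendsto (fun N : ℕ => poch (q^2) (2*N)) atTop (𝓝 PL) :=
      hpoch.comp (tendsto_atTop_mono (fun n => show id n ≤ 2*n by simp [id]; omega) tendsto_id)
    have hu : Tendsto (fun N : ℕ => poch (q^2) ((N:ℤ)+ℓ).toNat) atTop (𝓝 PL) :=
      hpoch.comp (tendsto_atTop_mono (fun n => by omega : ∀ n : ℕ, n - ℓ.natAbs ≤ ((n:ℤ)+ℓ).toNat)
        (tendsto_sub_atTop_nat _))
    have hv : Tendsto (fun N : ℕ => poch (q^2) ((N:ℤ)-ℓ).toNat) atTop (𝓝 PL) :=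
      hpoch.comp (tendsto_atTop_mono (fun n => by omega : ∀ n : ℕ, n - ℓ.natAbs ≤ ((n:ℤ)-ℓ).toNat)
        (tendsto_sub_atTop_nat _))
    have hdiv : Tendsto (fun N : ℕ => poch (q^2) N * poch (q^2) (2*N)
        / (poch (q^2) ((N:ℤ)+ℓ).toNat * poch (q^2) ((N:ℤ)-ℓ).toNat)) atTop
        (𝓝 (PL * PL / (PL * PL))) :=
      (hpoch.mul h2N).div (hu.mul hv) (mul_ne_zero hPL0 hPL0)
    rw [div_self (mul_ne_zero hPL0 hPL0)] at hdiv
    have hcong : ∀ᶠ N : ℕ in atTop,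
        poch (q^2) N * poch (q^2) (2*N)
          / (poch (q^2) ((N:ℤ)+ℓ).toNat * poch (q^2) ((N:ℤ)-ℓ).toNat)
        = poch (q^2) N * cc (q^2) N ℓ := by
      filter_upwards [Filter.eventually_ge_atTop ℓ.natAbs] with N hN
      rw [cc_eq (q^2) (a := ((N:ℤ)+ℓ).toNat) (b := ((N:ℤ)-ℓ).toNat) (by omega) (by omega),
        mul_div_assoc]
    have hbase : Tendsto (fun N => poch (q^2) N * cc (q^2) N ℓ) atTop (𝓝 1) :=
      Filter.Tendsto.congr' hcong hdiv
    have := hbase.mul_const (q^(ℓ^2) * y^ℓ)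
    rwa [one_mul] at this
  -- uniform domination
  have hbound : ∀ (N : ℕ) (ℓ : ℤ),
      ‖(poch (q^2) N * cc (q^2) N ℓ) * (q^(ℓ^2) * y^ℓ)‖
        ≤ (B*B*(C*C)) * ‖(q^(ℓ^2) * y^ℓ : ℂ)‖ := by
    intro N ℓ
    rcases le_or_gt ℓ.natAbs N with hl | hl
    · rw [cc_eq (q^2) (a := ((N:ℤ)+ℓ).toNat) (b := ((N:ℤ)-ℓ).toNat) (by omega) (by omega)]
      rw [show poch (q^2) N * (poch (q^2) (2*N)
          / (poch (q^2) ((N:ℤ)+ℓ).toNat * poch (q^2) ((N:ℤ)-ℓ).toNat))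
        = poch (q^2) N * poch (q^2) (2*N)
          * (poch (q^2) ((N:ℤ)+ℓ).toNat)⁻¹ * (poch (q^2) ((N:ℤ)-ℓ).toNat)⁻¹ by
          rw [div_eq_mul_inv, mul_inv]; ring]
      simp only [norm_mul]
      have hstep : ‖poch (q^2) N‖ * ‖poch (q^2) (2*N)‖ * ‖(poch (q^2) ((N:ℤ)+ℓ).toNat)⁻¹‖
          * ‖(poch (q^2) ((N:ℤ)-ℓ).toNat)⁻¹‖ ≤ B*B*C*C := by
        have m1 : ‖poch (q^2) N‖ * ‖poch (q^2) (2*N)‖ ≤ B*B :=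
          mul_le_mul (hB N) (hB _) (norm_nonneg _) hB0
        have m2 : ‖poch (q^2) N‖ * ‖poch (q^2) (2*N)‖ * ‖(poch (q^2) ((N:ℤ)+ℓ).toNat)⁻¹‖
            ≤ B*B*C := mul_le_mul m1 (hC _) (norm_nonneg _) (by positivity)
        exact mul_le_mul m2 (hC _) (norm_nonneg _) (by positivity)
      calc ‖poch (q^2) N‖ * ‖poch (q^2) (2*N)‖ * ‖(poch (q^2) ((N:ℤ)+ℓ).toNat)⁻¹‖
            * ‖(poch (q^2) ((N:ℤ)-ℓ).toNat)⁻¹‖ * (‖(q^(ℓ^2) : ℂ)‖ * ‖(y^ℓ : ℂ)‖)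
          ≤ B*B*C*C * (‖(q^(ℓ^2) : ℂ)‖ * ‖(y^ℓ : ℂ)‖) :=
            mul_le_mul_of_nonneg_right hstep (by positivity)
        _ = (B*B*(C*C)) * (‖(q^(ℓ^2) : ℂ)‖ * ‖(y^ℓ : ℂ)‖) := by ring
    · rw [cc_eq_zero (q^2) (by omega), mul_zero, zero_mul, norm_zero]
      positivity
  -- Tannery's theorem
  have htan : Tendsto (fun N => ∑' ℓ : ℤ, (poch (q^2) N * cc (q^2) N ℓ) * (q^(ℓ^2) * y^ℓ))
      atTop (𝓝 (∑' ℓ : ℤ, q^(ℓ^2) * y^ℓ)) := by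
    refine tendsto_tsum_of_dominated_convergence (hsum.mul_left (B*B*(C*C))) hptw ?_
    exact Filter.Eventually.of_forall fun N ℓ => hbound N ℓ
  have hA : Tendsto (fun N => ∏ j ∈ Finset.range N,
      ((1 - (q^2)^(j+1)) * (1 + q^(2*j+1)*y) * (1 + q^(2*j+1)*y⁻¹))) atTop
      (𝓝 (∑' ℓ : ℤ, q^(ℓ^2) * y^ℓ)) :=
    htan.congr fun N => (hfin N).symm
  -- the infinite product
  obtain ⟨P, HP⟩ : ∃ P : ℂ, HasProd
      (fun j : ℕ => (1 - (q^2)^(j+1)) * (1 + q^(2*j+1)*y) * (1 + q^(2*j+1)*y⁻¹)) P := by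
    by_cases hgz : ∀ j : ℕ, (1 - (q^2)^(j+1)) * (1 + q^(2*j+1)*y) * (1 + q^(2*j+1)*y⁻¹) ≠ 0
    · -- summable logs
      have hgs : Summable fun j : ℕ =>
          ‖(1 - (q^2)^(j+1)) * (1 + q^(2*j+1)*y) * (1 + q^(2*j+1)*y⁻¹) - 1‖ := by
        set K : ℝ := 1 + 2*‖y‖ + 2*‖y⁻¹‖ + 2*(‖y‖*‖y⁻¹‖) with hK
        refine Summable.of_nonneg_of_le (fun j => norm_nonneg _) (fun j => ?_)
          ((summable_geometric_of_lt_one (norm_nonneg q) hq).mul_right K)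
        have h1 : (1 - (q^2)^(j+1)) * (1 + q^(2*j+1)*y) * (1 + q^(2*j+1)*y⁻¹) - 1
            = (1 + (-((q^2)^(j+1)))) * (1 + q^(2*j+1)*y) * (1 + q^(2*j+1)*y⁻¹) - 1 := by
          ring
        rw [h1]
        have hq1 : ‖q‖ ≤ 1 := le_of_lt hq
        have hqj1 : ‖q‖^j ≤ 1 := pow_le_one₀ (norm_nonneg q) hq1
        have e1 : ‖-((q^2)^(j+1))‖ ≤ ‖q‖^j := by
          rw [norm_neg, norm_pow, norm_pow, ← pow_mul]
          exact pow_le_pow_of_le_one (norm_nonneg q) hq1 (by omega)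
        have e2 : ‖q^(2*j+1)*y‖ ≤ ‖q‖^j * ‖y‖ := by
          rw [norm_mul, norm_pow]
          gcongr ?_ * _
          exact pow_le_pow_of_le_one (norm_nonneg q) hq1 (by omega)
        have e3 : ‖q^(2*j+1)*y⁻¹‖ ≤ ‖q‖^j * ‖y⁻¹‖ := by
          rw [norm_mul, norm_pow]
          gcongr ?_ * _
          exact pow_le_pow_of_le_one (norm_nonneg q) hq1 (by omega)
        have := norm_triple_sub_one (ε := ‖q‖^j) (Y := ‖y‖) (Y' := ‖y⁻¹‖)
          hqj1 (by positivity) e1 e2 e3 (norm_nonneg _) (norm_nonneg _)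
        calc ‖(1 + -((q^2)^(j+1))) * (1 + q^(2*j+1)*y) * (1 + q^(2*j+1)*y⁻¹) - 1‖
            ≤ ‖q‖^j * (1 + 2*‖y‖ + 2*‖y⁻¹‖ + 2*(‖y‖*‖y⁻¹‖)) := this
          _ = ‖q‖^j * K := by rw [hK]
      exact ⟨_, hasProd_of_summable_log hgz (summable_log_of_summable_norm hgs)⟩
    · push_neg at hgz
      obtain ⟨j₀, hj₀⟩ := hgz
      exact ⟨0, hasProd_zero_of_eq_zero j₀ hj₀⟩
  have h1 := HP.tendsto_prod_nat
  have h2 : (∑' ℓ : ℤ, q^(ℓ^2) * y^ℓ) = P := tendsto_nhds_unique hA h1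
  rw [h2, HP.tprod_eq]

theorem jacobi_triple_product (z τ : ℂ) (hτ : 0 < τ.im) :
    (∑' ℓ : ℤ, Complex.exp (Real.pi * I * (ℓ : ℂ) ^ 2 * τ + 2 * Real.pi * I * (ℓ : ℂ) * z))
      = ∏' ℓ : ℕ,
        (1 - Complex.exp (2 * ((ℓ : ℂ) + 1) * Real.pi * I * τ)) *
        (1 + Complex.exp ((2 * ((ℓ : ℂ) + 1) - 1) * Real.pi * I * τ + 2 * Real.pi * I * z)) *
        (1 + Complex.exp ((2 * ((ℓ : ℂ) + 1) - 1) * Real.pi * I * τ - 2 * Real.pi * I * z)) := by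
  have hq0 : Complex.exp (Real.pi * I * τ) ≠ 0 := Complex.exp_ne_zero _
  have hy0 : Complex.exp (2 * Real.pi * I * z) ≠ 0 := Complex.exp_ne_zero _
  have hre : ((Real.pi : ℂ) * I * τ).re = -(Real.pi * τ.im) := by
    simp [Complex.mul_re, Complex.mul_im]
  have hq : ‖Complex.exp (Real.pi * I * τ)‖ < 1 := by
    rw [Complex.norm_exp, hre, Real.exp_lt_one_iff]
    have := Real.pi_pos
    nlinarith
  have hterm : ∀ ℓ : ℤ, (Complex.exp (Real.pi * I * τ))^(ℓ^2)
      * (Complex.exp (2 * Real.pi * I * z))^ℓ = jacobiTheta₂_term ℓ z τ := fun ℓ => by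
    rw [jacobiTheta₂_term, ← Complex.exp_int_mul, ← Complex.exp_int_mul, ← Complex.exp_add]
    congr 1
    push_cast
    ring
  have hsum : Summable fun ℓ : ℤ =>
      ‖((Complex.exp (Real.pi * I * τ))^(ℓ^2) * (Complex.exp (2 * Real.pi * I * z))^ℓ : ℂ)‖ := by
    have h0 : Summable fun n : ℤ => ‖jacobiTheta₂_term n z τ‖ := by
      refine (summable_pow_mul_jacobiTheta₂_term_bound |z.im| hτ 0).of_norm_bounded fun n => ?_
      simpa only [pow_zero, one_mul, norm_norm] using
        norm_jacobiTheta₂_term_le hτ (le_refl |z.im|) (le_refl τ.im) n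
    exact h0.congr fun ℓ => (congrArg norm (hterm ℓ)).symm
  have key := jtp_qy _ _ hq hq0 hy0 hsum
  have hL : (∑' ℓ : ℤ, Complex.exp (Real.pi * I * (ℓ : ℂ) ^ 2 * τ + 2 * Real.pi * I * (ℓ : ℂ) * z))
      = ∑' ℓ : ℤ, (Complex.exp (Real.pi * I * τ))^(ℓ^2) * (Complex.exp (2 * Real.pi * I * z))^ℓ := by
    refine tsum_congr fun ℓ => ?_
    rw [hterm ℓ, jacobiTheta₂_term]
    congr 1
    push_cast
    ring
  rw [hL, key]
  refine tprod_congr fun j => ?_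
  have f1 : Complex.exp (2 * ((j : ℂ) + 1) * Real.pi * I * τ)
      = ((Complex.exp (Real.pi * I * τ))^2)^(j+1) := by
    rw [← pow_mul, ← Complex.exp_nat_mul]
    congr 1
    push_cast
    ring
  have f2 : Complex.exp ((2 * ((j : ℂ) + 1) - 1) * Real.pi * I * τ + 2 * Real.pi * I * z)
      = (Complex.exp (Real.pi * I * τ))^(2*j+1) * Complex.exp (2 * Real.pi * I * z) := by
    rw [Complex.exp_add]
    congr 1
    rw [← Complex.exp_nat_mul]
    congr 1
    push_cast
    ring
  have f3 : Complex.exp ((2 * ((j : ℂ) + 1) - 1) * Real.pi * I * τ - 2 * Real.pi * I * z)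
      = (Complex.exp (Real.pi * I * τ))^(2*j+1) * (Complex.exp (2 * Real.pi * I * z))⁻¹ := by
    rw [sub_eq_add_neg, Complex.exp_add, ← Complex.exp_neg]
    congr 1
    rw [← Complex.exp_nat_mul]
    congr 1
    push_cast
    ring
  rw [f1, f2, f3]
end

section
/- The integral 𝓘 = ∫_{−∞}^{∞} [ y e^{−y²}/(√π · erfc(y)) − χ_{(0,∞)}(y)(y² + 1/2) ] dy converges absolutely, i.e. the integrand is integrable on ℝ. -/
open MeasureTheory

/-- The complementary error function `erfc y = (2/√π) ∫_y^∞ e^{-t²} dt`. -/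
noncomputable def erfc (y : ℝ) : ℝ :=
  (2 / Real.sqrt Real.pi) * ∫ t in Set.Ioi y, Real.exp (-t ^ 2)

/-!
With `G y = ∫_y^∞ e^{-t²} dt` we have `√π erfc y = 2 G y`. For `y ≤ 0` the integrand is at most
`|y| e^{-y²} / (2 G 0)` in absolute value, as `G` is antitone. For `y > 0`, comparing derivatives
with `G' = -e^{-y²}` of functions that also vanish at `+∞` gives
`y e^{-y²} / (2y² + 1) ≤ G y ≤ e^{-y²} (1/(2y) - 1/(4y³) + 3/(8y⁵))`, the upper bound being the
three-term asymptotic expansion of `G`. Hence `y e^{-y²} / (2 G y)` lies between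
`4y⁶ / (4y⁴ - 2y² + 3)` and `y² + 1/2`, so the integrand is `O(1 / (1 + y²))` there.
-/

open Set Real Filter Topology

theorem le_of_hasDerivAt_le_of_tendsto {f g f' g' : ℝ → ℝ} {a l : ℝ}
    (hf : ∀ x, a ≤ x → HasDerivAt f (f' x) x) (hg : ∀ x, a ≤ x → HasDerivAt g (g' x) x)
    (hfg' : ∀ x, a ≤ x → g' x ≤ f' x) (hf_lim : Tendsto f atTop (𝓝 l))
    (hg_lim : Tendsto g atTop (𝓝 l)) : f a ≤ g a := by
  have hmono : MonotoneOn (f - g) (Ici a) := by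
    refine monotoneOn_of_hasDerivWithinAt_nonneg (convex_Ici a)
      (fun x hx => ((hf x hx).sub (hg x hx)).continuousAt.continuousWithinAt)
      (fun x hx => ((hf x ?_).sub (hg x ?_)).hasDerivWithinAt) (fun x hx => ?_)
    all_goals rw [interior_Ici] at hx
    exacts [hx.le, hx.le, sub_nonneg.2 (hfg' x hx.le)]
  have hlim : Tendsto (f - g) atTop (𝓝 0) := sub_self l ▸ hf_lim.sub hg_lim
  refine sub_nonpos.1 (ge_of_tendsto hlim ?_)
  filter_upwards [eventually_ge_atTop a] with x hx
  exact hmono self_mem_Ici hx hx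

lemma integrable_exp_neg_sq : Integrable fun t : ℝ => exp (-t ^ 2) := by
  simpa using integrable_exp_neg_mul_sq one_pos

lemma integrable_mul_exp_neg_sq : Integrable fun t : ℝ => t * exp (-t ^ 2) := by
  simpa using integrable_mul_exp_neg_mul_sq one_pos

lemma hasDerivAt_exp_neg_sq (y : ℝ) :
    HasDerivAt (fun t => exp (-t ^ 2)) (-2 * y * exp (-y ^ 2)) y := by
  refine ((hasDerivAt_pow 2 y).fun_neg).exp.congr_deriv ?_
  norm_num
  ring

lemma tendsto_exp_neg_sq_mul_of_bounded {r : ℝ → ℝ} {C : ℝ} (hr : ∀ᶠ y in atTop, |r y| ≤ C) :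
    Tendsto (fun y => exp (-y ^ 2) * r y) atTop (𝓝 0) := by
  have hexp : Tendsto (fun y : ℝ => exp (-y ^ 2)) atTop (𝓝 0) :=
    tendsto_exp_atBot.comp (tendsto_neg_atTop_atBot.comp (tendsto_pow_atTop two_ne_zero))
  refine squeeze_zero_norm' ?_ (by simpa using hexp.mul_const C)
  filter_upwards [hr] with y hy
  rw [norm_mul, norm_of_nonneg (exp_pos _).le, norm_eq_abs]
  exact mul_le_mul_of_nonneg_left hy (exp_pos _).le

noncomputable def gaussianTail (y : ℝ) : ℝ := ∫ t in Ioi y, exp (-t ^ 2)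

lemma gaussianTail_pos (y : ℝ) : 0 < gaussianTail y := by
  rw [gaussianTail, setIntegral_pos_iff_support_of_nonneg_ae
    (.of_forall fun t => (exp_pos _).le) integrable_exp_neg_sq.integrableOn]
  simp [Function.support, exp_ne_zero]

lemma antitone_gaussianTail : Antitone gaussianTail := fun _ _ hab =>
  setIntegral_mono_set integrable_exp_neg_sq.integrableOn
    (.of_forall fun _ => (exp_pos _).le) (Ioi_subset_Ioi hab).eventuallyLE

lemma hasDerivAt_gaussianTail (y : ℝ) : HasDerivAt gaussianTail (-exp (-y ^ 2)) y := by
  have h : gaussianTail = fun u => (∫ t in u..0, exp (-t ^ 2)) + gaussianTail 0 := by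
    ext u
    exact (intervalIntegral.integral_interval_add_Ioi integrable_exp_neg_sq.integrableOn
      integrable_exp_neg_sq.integrableOn).symm
  have hcont : Continuous fun t : ℝ => exp (-t ^ 2) := by fun_prop
  rw [h]
  exact (intervalIntegral.integral_hasDerivAt_left integrable_exp_neg_sq.intervalIntegrable
    (hcont.stronglyMeasurableAtFilter _ _) hcont.continuousAt).add_const _

@[fun_prop]
lemma continuous_gaussianTail : Continuous gaussianTail :=
  continuous_iff_continuousAt.2 fun y => (hasDerivAt_gaussianTail y).continuousAt

lemma tendsto_gaussianTail_atTop : Tendsto gaussianTail atTop (𝓝 0) := by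
  have h := tendsto_setIntegral_of_antitone (μ := volume) (f := fun t : ℝ => exp (-t ^ 2))
    (fun y : ℝ => measurableSet_Ioi) (fun _ _ hab => Ioi_subset_Ioi hab)
    ⟨0, integrable_exp_neg_sq.integrableOn⟩
  have hempty : (⋂ y : ℝ, Ioi y) = ∅ := iInter_eq_empty_iff.2 fun x => ⟨x, lt_irrefl x⟩
  rwa [hempty, Measure.restrict_empty, integral_zero_measure] at h

lemma sqrt_pi_mul_erfc (y : ℝ) : √π * erfc y = 2 * gaussianTail y := by
  rw [erfc, gaussianTail, ← mul_assoc, mul_div_cancel₀ _ (sqrt_pos.2 pi_pos).ne']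

lemma mul_exp_neg_sq_div_le_gaussianTail (y : ℝ) :
    y * exp (-y ^ 2) / (2 * y ^ 2 + 1) ≤ gaussianTail y := by
  have hderiv (x : ℝ) : HasDerivAt (fun t => t * exp (-t ^ 2) / (2 * t ^ 2 + 1))
      (-exp (-x ^ 2) + 2 * exp (-x ^ 2) / (2 * x ^ 2 + 1) ^ 2) x := by
    have hden : HasDerivAt (fun t : ℝ => 2 * t ^ 2 + 1) (4 * x) x := by
      refine (((hasDerivAt_pow 2 x).const_mul 2).add_const 1).congr_deriv ?_
      norm_num; ring
    refine (((hasDerivAt_id' x).fun_mul (hasDerivAt_exp_neg_sq x)).div hden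
      (by positivity)).congr_deriv ?_
    field_simp
    ring
  have hlim : Tendsto (fun t => t * exp (-t ^ 2) / (2 * t ^ 2 + 1)) atTop (𝓝 0) := by
    have := tendsto_exp_neg_sq_mul_of_bounded (r := fun t : ℝ => t / (2 * t ^ 2 + 1)) (C := 1)
      (by
        filter_upwards [eventually_ge_atTop 0] with t ht
        rw [abs_of_nonneg (by positivity), div_le_one (by positivity)]
        nlinarith [sq_nonneg (t - 1)])
    refine this.congr fun t => ?_
    ring
  exact le_of_hasDerivAt_le_of_tendsto (fun x _ => hderiv x)
    (fun x _ => hasDerivAt_gaussianTail x)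
    (fun x _ => le_add_of_nonneg_right (by positivity)) hlim tendsto_gaussianTail_atTop

lemma gaussianTail_le {y : ℝ} (hy : 0 < y) :
    gaussianTail y ≤ exp (-y ^ 2) * (4 * y ^ 4 - 2 * y ^ 2 + 3) / (8 * y ^ 5) := by
  have hderiv {x : ℝ} (hx : 0 < x) :
      HasDerivAt (fun t => exp (-t ^ 2) * (4 * t ^ 4 - 2 * t ^ 2 + 3) / (8 * t ^ 5))
      (-exp (-x ^ 2) - 15 * exp (-x ^ 2) / (8 * x ^ 6)) x := by
    have hnum : HasDerivAt (fun t : ℝ => 4 * t ^ 4 - 2 * t ^ 2 + 3) (16 * x ^ 3 - 4 * x) x := by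
      refine ((((hasDerivAt_pow 4 x).const_mul 4).sub
        ((hasDerivAt_pow 2 x).const_mul 2)).add_const 3).congr_deriv ?_
      norm_num; ring
    have hden : HasDerivAt (fun t : ℝ => 8 * t ^ 5) (40 * x ^ 4) x := by
      refine ((hasDerivAt_pow 5 x).const_mul 8).congr_deriv ?_
      norm_num; ring
    refine (((hasDerivAt_exp_neg_sq x).fun_mul hnum).div hden (by positivity)).congr_deriv ?_
    field_simp
    ring
  have hlim : Tendsto (fun t => exp (-t ^ 2) * (4 * t ^ 4 - 2 * t ^ 2 + 3) / (8 * t ^ 5))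
      atTop (𝓝 0) := by
    have := tendsto_exp_neg_sq_mul_of_bounded
      (r := fun t : ℝ => (4 * t ^ 4 - 2 * t ^ 2 + 3) / (8 * t ^ 5)) (C := 1)
      (by
        filter_upwards [eventually_ge_atTop 1] with t ht
        have h4 : 1 ≤ t ^ 4 := one_le_pow₀ ht
        rw [abs_of_nonneg (div_nonneg (by nlinarith) (by positivity)), div_le_one (by positivity)]
        nlinarith [mul_le_mul_of_nonneg_left ht (by positivity : (0 : ℝ) ≤ t ^ 4)])
    refine this.congr fun t => ?_
    ring
  exact le_of_hasDerivAt_le_of_tendsto (fun x _ => hasDerivAt_gaussianTail x)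
    (fun x hx => hderiv (hy.trans_le hx))
    (fun x hx => sub_le_self _ (by have := hy.trans_le hx; positivity))
    tendsto_gaussianTail_atTop hlim

lemma mul_exp_neg_sq_div_gaussianTail_le (y : ℝ) :
    y * exp (-y ^ 2) / (2 * gaussianTail y) ≤ y ^ 2 + 1 / 2 := by
  have hG := gaussianTail_pos y
  have h := mul_exp_neg_sq_div_le_gaussianTail y
  rw [div_le_iff₀ (by positivity)] at h
  rw [div_le_iff₀ (by positivity)]
  linarith

lemma le_mul_exp_neg_sq_div_gaussianTail {y : ℝ} (hy : 0 < y) :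
    4 * y ^ 6 / (4 * y ^ 4 - 2 * y ^ 2 + 3) ≤ y * exp (-y ^ 2) / (2 * gaussianTail y) := by
  have hG := gaussianTail_pos y
  have hP : 0 < 4 * y ^ 4 - 2 * y ^ 2 + 3 := by nlinarith [sq_nonneg (2 * y ^ 2 - 1)]
  have h := gaussianTail_le hy
  rw [le_div_iff₀ (by positivity)] at h
  rw [div_le_div_iff₀ hP (by positivity)]
  nlinarith [exp_pos (-y ^ 2)]

lemma abs_mul_exp_neg_sq_div_gaussianTail_sub_le {y : ℝ} (hy : 0 < y) :
    |y * exp (-y ^ 2) / (2 * gaussianTail y) - (y ^ 2 + 1 / 2)| ≤ 2 * (1 + y ^ 2)⁻¹ := by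
  have hP : 0 < 4 * y ^ 4 - 2 * y ^ 2 + 3 := by nlinarith [sq_nonneg (2 * y ^ 2 - 1)]
  have hlow : y ^ 2 + 1 / 2 - 2 * (1 + y ^ 2)⁻¹ ≤ 4 * y ^ 6 / (4 * y ^ 4 - 2 * y ^ 2 + 3) := by
    rw [le_div_iff₀ hP]
    field_simp
    nlinarith [sq_nonneg (4 * y ^ 2 - 5)]
  rw [abs_le]
  constructor
  · linarith [le_mul_exp_neg_sq_div_gaussianTail hy]
  · linarith [mul_exp_neg_sq_div_gaussianTail_le y, inv_pos.2 (by positivity : 0 < 1 + y ^ 2)]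

lemma abs_mul_exp_neg_sq_div_gaussianTail_le {y : ℝ} (hy : y ≤ 0) :
    |y * exp (-y ^ 2) / (2 * gaussianTail y)| ≤ |y * exp (-y ^ 2)| * (2 * gaussianTail 0)⁻¹ := by
  have h0 := gaussianTail_pos 0
  rw [abs_div, abs_of_pos (mul_pos two_pos (gaussianTail_pos y)), div_eq_mul_inv]
  gcongr
  exact antitone_gaussianTail hy

theorem integrand_I_integrable :
    Integrable (fun y : ℝ =>
      y * Real.exp (-y ^ 2) / (Real.sqrt Real.pi * erfc y)
        - Set.indicator (Set.Ioi (0 : ℝ)) (fun y => y ^ 2 + 1 / 2) y) := by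
  simp_rw [sqrt_pi_mul_erfc]
  have hdom : Integrable fun y : ℝ =>
      2 * (1 + y ^ 2)⁻¹ + |y * exp (-y ^ 2)| * (2 * gaussianTail 0)⁻¹ :=
    (integrable_inv_one_add_sq.const_mul 2).add (integrable_mul_exp_neg_sq.abs.mul_const _)
  have hmeas : Measurable fun y : ℝ =>
      y * exp (-y ^ 2) / (2 * gaussianTail y) - (Ioi 0).indicator (fun y => y ^ 2 + 1 / 2) y :=
    (by fun_prop : Measurable fun y => y * exp (-y ^ 2) / (2 * gaussianTail y)).sub
      ((by fun_prop : Measurable fun y : ℝ => y ^ 2 + 1 / 2).indicator measurableSet_Ioi)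
  refine hdom.mono' hmeas.aestronglyMeasurable (.of_forall fun y => ?_)
  have hG0 : 0 ≤ (2 * gaussianTail 0)⁻¹ := (inv_pos.2 (mul_pos two_pos (gaussianTail_pos 0))).le
  rw [norm_eq_abs]
  rcases lt_or_ge 0 y with hy | hy
  · rw [indicator_of_mem (mem_Ioi.2 hy)]
    exact le_add_of_le_of_nonneg (abs_mul_exp_neg_sq_div_gaussianTail_sub_le hy)
      (mul_nonneg (abs_nonneg _) hG0)
  · rw [indicator_of_notMem (notMem_Ioi.2 hy), sub_zero]
    exact le_add_of_nonneg_of_le (by positivity) (abs_mul_exp_neg_sq_div_gaussianTail_le hy)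
end

section
/- Integration-by-parts identity for erfc integrals: the constants 𝓘₂ = ∫_{−∞}^{∞}[ y³e^{−y²}/(√π erfc(y)) − χ_{(0,∞)}(y)(y⁴ + y²/2 − 1/2) ]dy and 𝓘₄ = ∫_{−∞}^{∞}[ (y e^{−y²}/(√π erfc(y)))² − χ_{(0,∞)}(y)(y⁴ + y² − 3/4) ]dy satisfy 𝓘₂ − 𝓘₄ = 𝓘, where 𝓘 = ∫_{−∞}^{∞}[ y e^{−y²}/(√π erfc(y)) − χ_{(0,∞)}(y)(y² + 1/2) ]dy. -/
open MeasureTheory Set Filter Real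

noncomputable def II (y : ℝ) : ℝ := ∫ t in Set.Ioi y, Real.exp (-t ^ 2)

lemma exp_neg_sq_integrable : Integrable (fun t : ℝ => Real.exp (-t ^ 2)) := by
  simpa using integrable_exp_neg_mul_sq (b := 1) one_pos

lemma exp_neg_sq_cont : Continuous (fun t : ℝ => Real.exp (-t ^ 2)) := by continuity

lemma II_pos (y : ℝ) : 0 < II y := by
  refine (setIntegral_pos_iff_support_of_nonneg_ae
    (Eventually.of_forall (fun t => (Real.exp_pos _).le))
    exp_neg_sq_integrable.integrableOn).mpr ?_
  have : (Function.support fun t : ℝ => Real.exp (-t ^ 2)) = Set.univ :=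
    Set.eq_univ_of_forall (fun t => (Real.exp_pos _).ne')
  simp [this]

lemma II_eq (y : ℝ) : II y = II 0 - ∫ t in (0:ℝ)..y, Real.exp (-t ^ 2) := by
  have h1 := intervalIntegral.integral_Iic_add_Ioi (b := y) (μ := volume)
    (f := fun t : ℝ => Real.exp (-t ^ 2))
    exp_neg_sq_integrable.integrableOn exp_neg_sq_integrable.integrableOn
  have h2 := intervalIntegral.integral_Iic_add_Ioi (b := (0:ℝ)) (μ := volume)
    (f := fun t : ℝ => Real.exp (-t ^ 2))
    exp_neg_sq_integrable.integrableOn exp_neg_sq_integrable.integrableOn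
  have h3 := intervalIntegral.integral_Iic_sub_Iic (μ := volume) (a := (0:ℝ)) (b := y)
    (f := fun t : ℝ => Real.exp (-t ^ 2))
    exp_neg_sq_integrable.integrableOn exp_neg_sq_integrable.integrableOn
  unfold II
  linarith

lemma II_hasDerivAt (y : ℝ) : HasDerivAt II (-Real.exp (-y ^ 2)) y := by
  have h1 : HasDerivAt (fun u : ℝ => ∫ t in (0:ℝ)..u, Real.exp (-t ^ 2)) (Real.exp (-y ^ 2)) y :=
    intervalIntegral.integral_hasDerivAt_right
      (exp_neg_sq_integrable.intervalIntegrable)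
      (exp_neg_sq_cont.stronglyMeasurableAtFilter _ _)
      exp_neg_sq_cont.continuousAt
  have h := (hasDerivAt_const y (II 0)).sub h1
  rw [zero_sub] at h
  exact h.congr_of_eventuallyEq (Eventually.of_forall (fun u => (II_eq u)))

lemma II_cont : Continuous II :=
  continuous_iff_continuousAt.2 fun y => (II_hasDerivAt y).continuousAt

lemma tendsto_II_top : Tendsto II atTop (nhds 0) := by
  have h1 : Tendsto (fun y : ℝ => ∫ t in (0:ℝ)..y, Real.exp (-t ^ 2)) atTop (nhds (II 0)) :=
    intervalIntegral_tendsto_integral_Ioi 0 exp_neg_sq_integrable.integrableOn tendsto_id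
  have h2 : Tendsto (fun y : ℝ => II 0 - ∫ t in (0:ℝ)..y, Real.exp (-t ^ 2)) atTop
      (nhds (II 0 - II 0)) := tendsto_const_nhds.sub h1
  rw [sub_self] at h2
  exact h2.congr (fun y => (II_eq y).symm)lemma sqrt_pi_pos : 0 < Real.sqrt Real.pi := Real.sqrt_pos.2 Real.pi_pos

lemma sqrtpi_erfc (y : ℝ) : Real.sqrt Real.pi * erfc y = 2 * II y := by
  unfold erfc II
  field_simp

noncomputable def hh (y : ℝ) : ℝ := Real.exp (-y ^ 2) / (Real.sqrt Real.pi * erfc y)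

lemma hh_eq (y : ℝ) : hh y = Real.exp (-y ^ 2) / (2 * II y) := by
  rw [hh, sqrtpi_erfc]

lemma hh_pos (y : ℝ) : 0 < hh y := by
  have := II_pos y; rw [hh_eq]; positivity

lemma hh_hasDerivAt (y : ℝ) : HasDerivAt hh (-2 * y * hh y + 2 * (hh y) ^ 2) y := by
  have hne : 2 * II y ≠ 0 := by have := II_pos y; positivity
  have h1 : HasDerivAt (fun u : ℝ => Real.exp (-u ^ 2)) (-(2*y) * Real.exp (-y ^ 2)) y := by
    have := (Real.hasDerivAt_exp (-y ^ 2)).comp y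
      (((hasDerivAt_pow 2 y).neg))
    refine this.congr_deriv ?_
    ring
  have h2 : HasDerivAt (fun u : ℝ => 2 * II u) (2 * (-Real.exp (-y ^ 2))) y :=
    (II_hasDerivAt y).const_mul 2
  have h3 := h1.div h2 hne
  have : hh = fun u => Real.exp (-u ^ 2) / (2 * II u) := funext hh_eq
  rw [this]
  refine h3.congr_deriv ?_
  have h4 := (II_pos y).ne'
  field_simp
  ring

lemma hh_cont : Continuous hh :=
  continuous_iff_continuousAt.2 fun y => (hh_hasDerivAt y).continuousAt
lemma nonneg_of_deriv_nonpos {a : ℝ} {F F' : ℝ → ℝ}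
    (hd : ∀ x ∈ Set.Ici a, HasDerivAt F (F' x) x)
    (hs : ∀ x ∈ Set.Ici a, F' x ≤ 0)
    (hl : Tendsto F atTop (nhds 0)) : ∀ x ∈ Set.Ici a, 0 ≤ F x := by
  intro x hx
  have hanti : AntitoneOn F (Set.Ici x) := by
    refine antitoneOn_of_deriv_nonpos (convex_Ici x) ?_ ?_ ?_
    · exact fun z hz => (hd z (Set.mem_Ici.2 (le_trans hx hz))).continuousAt.continuousWithinAt
    · intro z hz
      rw [interior_Ici] at hz
      exact (hd z (Set.mem_Ici.2 (le_trans hx hz.le))).differentiableAt.differentiableWithinAt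
    · intro z hz
      rw [interior_Ici] at hz
      rw [(hd z (Set.mem_Ici.2 (le_trans hx hz.le))).deriv]
      exact hs z (Set.mem_Ici.2 (le_trans hx hz.le))
  refine le_of_tendsto hl ?_
  filter_upwards [eventually_ge_atTop x] with z hz
  exact hanti (Set.self_mem_Ici) hz hz

lemma tendsto_exp_mul_aux {A : ℝ → ℝ} (hA : ∀ x ≥ (1:ℝ), |A x| ≤ 1) :
    Tendsto (fun x => Real.exp (-x ^ 2) * A x) atTop (nhds 0) := by
  refine squeeze_zero_norm' (a := fun x => Real.exp (-x)) ?_ ?_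
  · filter_upwards [eventually_ge_atTop (1:ℝ)] with x hx
    have h1 : Real.exp (-x ^ 2) ≤ Real.exp (-x) := by
      apply Real.exp_le_exp.2; nlinarith
    have := hA x hx
    calc ‖Real.exp (-x ^ 2) * A x‖ = Real.exp (-x ^ 2) * |A x| := by
          rw [norm_mul, Real.norm_eq_abs, abs_of_pos (Real.exp_pos _), Real.norm_eq_abs]
      _ ≤ Real.exp (-x) * 1 := by
          apply mul_le_mul h1 this (abs_nonneg _) (Real.exp_pos _).le
      _ = Real.exp (-x) := mul_one _
  · exact Real.tendsto_exp_atBot.comp tendsto_neg_atTop_atBot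

lemma bound1 : ∀ x ∈ Set.Ici (1:ℝ), 0 ≤ II x - Real.exp (-x ^ 2) * ((2*x^2 - 1)/(4*x^3)) := by
  apply nonneg_of_deriv_nonpos
    (F' := fun x => -Real.exp (-x ^ 2) * (3 / (4 * x ^ 4)))
  · intro x hx
    have hx0 : x ≠ 0 := by intro h; rw [h] at hx; simp at hx; linarith [hx]
    have h1 : HasDerivAt (fun u : ℝ => Real.exp (-u ^ 2)) (-(2*x) * Real.exp (-x ^ 2)) x := by
      have := (Real.hasDerivAt_exp (-x ^ 2)).comp x (((hasDerivAt_pow 2 x).neg))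
      refine this.congr_deriv ?_; ring
    have h2 : HasDerivAt (fun u : ℝ => (2*u^2 - 1)/(4*u^3))
        ((4*x * (4*x^3) - (2*x^2-1) * (12*x^2)) / (4*x^3)^2) x := by
      have hn : HasDerivAt (fun u : ℝ => 2*u^2 - 1) (4*x) x := by
        have := ((hasDerivAt_pow 2 x).const_mul 2).sub_const 1
        refine this.congr_deriv ?_; ring
      have hd : HasDerivAt (fun u : ℝ => 4*u^3) (12*x^2) x := by
        have := (hasDerivAt_pow 3 x).const_mul 4
        refine this.congr_deriv ?_; ring
      exact hn.div hd (by positivity)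
    have h3 := (II_hasDerivAt x).sub (h1.mul h2)
    refine h3.congr_deriv ?_
    have h4 : (4:ℝ)*x^3 ≠ 0 := by positivity
    field_simp
    ring
  · intro x hx
    have h : (0:ℝ) < x := lt_of_lt_of_le one_pos hx
    have := Real.exp_pos (-x ^ 2)
    have h2 : (0:ℝ) < 3 / (4 * x ^ 4) := by positivity
    nlinarith
  · have h1 := tendsto_exp_mul_aux (A := fun x => (2*x^2 - 1)/(4*x^3)) ?_
    · have := tendsto_II_top.sub h1
      simpa using this
    · intro x hx
      rw [abs_div, div_le_one (by positivity : (0:ℝ) < |4*x^3|)]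
      have h2 : |2*x^2 - 1| ≤ 2*x^2 := by
        rw [abs_le]; constructor <;> nlinarith
      have h3 : |4*x^3| = 4*x^3 := abs_of_pos (by positivity)
      nlinarith

lemma bound2 : ∀ x ∈ Set.Ici (1:ℝ), 0 ≤ Real.exp (-x ^ 2) * ((4*x^4 - 2*x^2 + 3)/(8*x^5)) - II x := by
  apply nonneg_of_deriv_nonpos
    (F' := fun x => -Real.exp (-x ^ 2) * (15 / (8 * x ^ 6)))
  · intro x hx
    have hx0 : (0:ℝ) < x := lt_of_lt_of_le one_pos hx
    have h1 : HasDerivAt (fun u : ℝ => Real.exp (-u ^ 2)) (-(2*x) * Real.exp (-x ^ 2)) x := by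
      have := (Real.hasDerivAt_exp (-x ^ 2)).comp x (((hasDerivAt_pow 2 x).neg))
      refine this.congr_deriv ?_; ring
    have h2 : HasDerivAt (fun u : ℝ => (4*u^4 - 2*u^2 + 3)/(8*u^5))
        (((16*x^3 - 4*x) * (8*x^5) - (4*x^4 - 2*x^2 + 3) * (40*x^4)) / (8*x^5)^2) x := by
      have hn : HasDerivAt (fun u : ℝ => 4*u^4 - 2*u^2 + 3) (16*x^3 - 4*x) x := by
        have := (((hasDerivAt_pow 4 x).const_mul 4).sub ((hasDerivAt_pow 2 x).const_mul 2)).add_const 3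
        refine this.congr_deriv ?_; ring
      have hd : HasDerivAt (fun u : ℝ => 8*u^5) (40*x^4) x := by
        have := (hasDerivAt_pow 5 x).const_mul 8
        refine this.congr_deriv ?_; ring
      exact hn.div hd (by positivity)
    have h3 := (h1.mul h2).sub (II_hasDerivAt x)
    refine h3.congr_deriv ?_
    have h4 : (8:ℝ)*x^5 ≠ 0 := by positivity
    field_simp
    ring
  · intro x hx
    have h : (0:ℝ) < x := lt_of_lt_of_le one_pos hx
    have := Real.exp_pos (-x ^ 2)
    have h2 : (0:ℝ) < 15 / (8 * x ^ 6) := by positivity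
    nlinarith
  · have h1 := tendsto_exp_mul_aux (A := fun x => (4*x^4 - 2*x^2 + 3)/(8*x^5)) ?_
    · have := h1.sub tendsto_II_top
      simpa using this
    · intro x hx
      rw [abs_div, div_le_one (by positivity : (0:ℝ) < |8*x^5|)]
      have hx2 : (1:ℝ) ≤ x^2 := by nlinarith
      have hx4 : (1:ℝ) ≤ x^4 := by nlinarith
      have hx5 : x^4 ≤ x^5 := by nlinarith
      have h2 : |4*x^4 - 2*x^2 + 3| ≤ 8*x^4 := by
        rw [abs_le]; constructor <;> nlinarith
      have h3 : |8*x^5| = 8*x^5 := abs_of_pos (by positivity)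
      linarith

lemma bound3 : ∀ x ∈ Set.Ici (1:ℝ), 0 ≤ II x - Real.exp (-x ^ 2) * ((8*x^6 - 4*x^4 + 6*x^2 - 15)/(16*x^7)) := by
  apply nonneg_of_deriv_nonpos
    (F' := fun x => -Real.exp (-x ^ 2) * (105 / (16 * x ^ 8)))
  · intro x hx
    have hx0 : (0:ℝ) < x := lt_of_lt_of_le one_pos hx
    have h1 : HasDerivAt (fun u : ℝ => Real.exp (-u ^ 2)) (-(2*x) * Real.exp (-x ^ 2)) x := by
      have := (Real.hasDerivAt_exp (-x ^ 2)).comp x (((hasDerivAt_pow 2 x).neg))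
      refine this.congr_deriv ?_; ring
    have h2 : HasDerivAt (fun u : ℝ => (8*u^6 - 4*u^4 + 6*u^2 - 15)/(16*u^7))
        (((48*x^5 - 16*x^3 + 12*x) * (16*x^7) - (8*x^6 - 4*x^4 + 6*x^2 - 15) * (112*x^6)) / (16*x^7)^2) x := by
      have hn : HasDerivAt (fun u : ℝ => 8*u^6 - 4*u^4 + 6*u^2 - 15) (48*x^5 - 16*x^3 + 12*x) x := by
        have := ((((hasDerivAt_pow 6 x).const_mul 8).sub ((hasDerivAt_pow 4 x).const_mul 4)).add
          ((hasDerivAt_pow 2 x).const_mul 6)).sub_const 15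
        refine this.congr_deriv ?_; ring
      have hd : HasDerivAt (fun u : ℝ => 16*u^7) (112*x^6) x := by
        have := (hasDerivAt_pow 7 x).const_mul 16
        refine this.congr_deriv ?_; ring
      exact hn.div hd (by positivity)
    have h3 := (II_hasDerivAt x).sub (h1.mul h2)
    refine h3.congr_deriv ?_
    have h4 : (16:ℝ)*x^7 ≠ 0 := by positivity
    field_simp
    ring
  · intro x hx
    have h : (0:ℝ) < x := lt_of_lt_of_le one_pos hx
    have := Real.exp_pos (-x ^ 2)
    have h2 : (0:ℝ) < 105 / (16 * x ^ 8) := by positivity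
    nlinarith
  · have h1 := tendsto_exp_mul_aux (A := fun x => (8*x^6 - 4*x^4 + 6*x^2 - 15)/(16*x^7)) ?_
    · have := tendsto_II_top.sub h1
      simpa using this
    · intro x hx
      rw [abs_div, div_le_one (by positivity : (0:ℝ) < |16*x^7|)]
      have hx2 : (1:ℝ) ≤ x^2 := by nlinarith
      have hx4 : (1:ℝ) ≤ x^4 := by nlinarith
      have hx6 : x^4 ≤ x^6 := by nlinarith
      have hx7 : x^6 ≤ x^7 := by nlinarith [pow_nonneg (by linarith : (0:ℝ) ≤ x) 6]
      have h2 : |8*x^6 - 4*x^4 + 6*x^2 - 15| ≤ 16*x^6 := by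
        rw [abs_le]; constructor <;> nlinarith
      have h3 : |16*x^7| = 16*x^7 := abs_of_pos (by positivity)
      linarith
lemma hh_upper : ∀ y ≥ (2:ℝ), hh y ≤ (2*y^6 + y^4 - y^2 + 16)/(2*y^5) := by
  intro y hy
  have hy0 : (0:ℝ) < y := by linarith
  have he : (0:ℝ) < Real.exp (-y ^ 2) := Real.exp_pos _
  have hI := II_pos y
  have h3 := bound3 y (by simp; linarith)
  have hy2 : (4:ℝ) ≤ y^2 := by nlinarith
  have hy2a : 4*y^2 ≤ y^4 := by nlinarith [sq_nonneg y]
  have hy4a : 4*y^4 ≤ y^6 := by nlinarith [pow_nonneg hy0.le 4]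
  have hC : (0:ℝ) < 8*y^6 - 4*y^4 + 6*y^2 - 15 := by nlinarith
  have hU : (0:ℝ) < 2*y^6 + y^4 - y^2 + 16 := by nlinarith
  have hP : (16:ℝ)*y^12 ≤ (2*y^6 + y^4 - y^2 + 16) * (8*y^6 - 4*y^4 + 6*y^2 - 15) := by
    nlinarith [sq_nonneg y, sq_nonneg (y^2), sq_nonneg (y^3), pow_nonneg hy0.le 6]
  rw [hh_eq, div_le_iff₀ (by positivity)]
  have expand : (2*y^6 + y^4 - y^2 + 16)/(2*y^5) *
      (2 * (Real.exp (-y ^ 2) * ((8*y^6 - 4*y^4 + 6*y^2 - 15)/(16*y^7))))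
      = Real.exp (-y ^ 2) *
        ((2*y^6 + y^4 - y^2 + 16) * (8*y^6 - 4*y^4 + 6*y^2 - 15) / (16*y^12)) := by
    field_simp
  have step1 : Real.exp (-y ^ 2) ≤ (2*y^6 + y^4 - y^2 + 16)/(2*y^5) *
      (2 * (Real.exp (-y ^ 2) * ((8*y^6 - 4*y^4 + 6*y^2 - 15)/(16*y^7)))) := by
    rw [expand]
    nth_rewrite 1 [← mul_one (Real.exp (-y ^ 2))]
    apply mul_le_mul_of_nonneg_left _ he.le
    rw [le_div_iff₀ (by positivity)]
    linarith
  have step2 : (2*y^6 + y^4 - y^2 + 16)/(2*y^5) *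
        (2 * (Real.exp (-y ^ 2) * ((8*y^6 - 4*y^4 + 6*y^2 - 15)/(16*y^7))))
      ≤ (2*y^6 + y^4 - y^2 + 16)/(2*y^5) * (2 * II y) := by
    apply mul_le_mul_of_nonneg_left _ (by positivity)
    linarith
  linarith

lemma hh_lower : ∀ y ≥ (2:ℝ), (2*y^6 + y^4 - y^2 - 16)/(2*y^5) ≤ hh y := by
  intro y hy
  have hy0 : (0:ℝ) < y := by linarith
  have he : (0:ℝ) < Real.exp (-y ^ 2) := Real.exp_pos _
  have hI := II_pos y
  have h2 := bound2 y (by simp; linarith)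
  have hy2 : (4:ℝ) ≤ y^2 := by nlinarith
  have hy2a : 4*y^2 ≤ y^4 := by nlinarith [sq_nonneg y]
  have hy4a : 4*y^4 ≤ y^6 := by nlinarith [pow_nonneg hy0.le 4]
  have hB : (0:ℝ) < 4*y^4 - 2*y^2 + 3 := by nlinarith
  have hL : (0:ℝ) < 2*y^6 + y^4 - y^2 - 16 := by nlinarith
  have hQ : (2*y^6 + y^4 - y^2 - 16) * (4*y^4 - 2*y^2 + 3) ≤ (8:ℝ)*y^10 := by
    nlinarith [sq_nonneg y, sq_nonneg (y^2), sq_nonneg (y^3), pow_nonneg hy0.le 6]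
  rw [hh_eq, le_div_iff₀ (by positivity)]
  have step2 : (2*y^6 + y^4 - y^2 - 16)/(2*y^5) * (2 * II y)
      ≤ (2*y^6 + y^4 - y^2 - 16)/(2*y^5) *
        (2 * (Real.exp (-y ^ 2) * ((4*y^4 - 2*y^2 + 3)/(8*y^5)))) := by
    apply mul_le_mul_of_nonneg_left _ (by positivity)
    linarith
  have expand : (2*y^6 + y^4 - y^2 - 16)/(2*y^5) *
      (2 * (Real.exp (-y ^ 2) * ((4*y^4 - 2*y^2 + 3)/(8*y^5))))
      = Real.exp (-y ^ 2) *
        ((2*y^6 + y^4 - y^2 - 16) * (4*y^4 - 2*y^2 + 3) / (8*y^10)) := by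
    field_simp
  have step1 : (2*y^6 + y^4 - y^2 - 16)/(2*y^5) *
      (2 * (Real.exp (-y ^ 2) * ((4*y^4 - 2*y^2 + 3)/(8*y^5)))) ≤ Real.exp (-y ^ 2) := by
    rw [expand]
    nth_rewrite 2 [← mul_one (Real.exp (-y ^ 2))]
    apply mul_le_mul_of_nonneg_left _ he.le
    rw [div_le_one (by positivity)]
    linarith
  linarith
lemma hh_le_exp : ∀ y ≤ (0:ℝ), hh y ≤ Real.exp (-y ^ 2) := by
  intro y hy
  have h0 : II 0 ≤ II y := by
    apply setIntegral_mono_set exp_neg_sq_integrable.integrableOn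
      (Eventually.of_forall fun t => (Real.exp_pos _).le)
    exact Filter.Eventually.of_forall (fun t ht => lt_of_le_of_lt hy ht)
  have hval : II 0 = Real.sqrt Real.pi / 2 := by
    have := integral_gaussian_Ioi 1
    simp only [neg_mul, one_mul, div_one] at this
    simpa [II] using this
  have hsq : (1:ℝ) ≤ Real.sqrt Real.pi := by
    rw [show (1:ℝ) = Real.sqrt 1 from (Real.sqrt_one).symm]
    exact Real.sqrt_le_sqrt (by linarith [Real.pi_gt_three])
  have h2 : (1:ℝ) ≤ 2 * II y := by
    rw [hval] at h0; linarith
  rw [hh_eq]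
  calc Real.exp (-y ^ 2) / (2 * II y) ≤ Real.exp (-y ^ 2) / 1 := by
        apply div_le_div_of_nonneg_left (Real.exp_pos _).le (by linarith [II_pos y]) h2
    _ = Real.exp (-y ^ 2) := div_one _

lemma master_integrable :
    Integrable (fun y : ℝ => (|y|^3 + y^2 + |y| + 1) * Real.exp (-y^2)) := by
  have h3 : Integrable (fun y : ℝ => |y|^3 * Real.exp (-y^2)) := by
    have := (integrable_rpow_mul_exp_neg_mul_sq (b := 1) one_pos (s := 3) (by norm_num)).abs
    refine this.congr (Eventually.of_forall fun y => ?_)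
    have hr : y ^ (3:ℝ) = y ^ (3:ℕ) := by
      rw [show ((3:ℝ)) = ((3:ℕ):ℝ) by norm_num, Real.rpow_natCast]
    simp only [hr, abs_mul, abs_of_pos (Real.exp_pos _), abs_pow]
    norm_num
  have h2 : Integrable (fun y : ℝ => y^2 * Real.exp (-y^2)) := by
    have := (integrable_rpow_mul_exp_neg_mul_sq (b := 1) one_pos (s := 2) (by norm_num))
    refine this.congr (Eventually.of_forall fun y => ?_)
    have hr : y ^ (2:ℝ) = y ^ (2:ℕ) := by
      rw [show ((2:ℝ)) = ((2:ℕ):ℝ) by norm_num, Real.rpow_natCast]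
    simp only [hr]
    norm_num
  have h1 : Integrable (fun y : ℝ => |y| * Real.exp (-y^2)) := by
    have := (integrable_rpow_mul_exp_neg_mul_sq (b := 1) one_pos (s := 1) (by norm_num)).abs
    refine this.congr (Eventually.of_forall fun y => ?_)
    have hr : y ^ (1:ℝ) = y := Real.rpow_one y
    simp only [hr, abs_mul, abs_of_pos (Real.exp_pos _)]
    norm_num
  have h0 : Integrable (fun y : ℝ => Real.exp (-y^2)) := by
    simpa using integrable_exp_neg_mul_sq (b := 1) one_pos
  have := ((h3.add h2).add h1).add h0
  refine this.congr (Eventually.of_forall fun y => ?_)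
  simp only [Pi.add_apply]
  ring

lemma tail_integrable (c : ℝ) : IntegrableOn (fun y : ℝ => c / y^2) (Set.Ioi 2) := by
  have h : IntegrableOn (fun x : ℝ => c * x ^ (-2:ℝ)) (Set.Ioi 2) :=
    (integrableOn_Ioi_rpow_of_lt (a := -2) (by norm_num) (c := 2) two_pos).const_mul c
  refine IntegrableOn.congr_fun h (fun x hx => ?_) measurableSet_Ioi
  have hx0 : (0:ℝ) < x := lt_trans two_pos hx
  rw [Real.rpow_neg hx0.le, show ((2:ℝ)) = ((2:ℕ):ℝ) by norm_num, Real.rpow_natCast]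
  rw [div_eq_mul_inv]

lemma integrable_of_three {F : ℝ → ℝ} (hm : AEStronglyMeasurable F volume) (c : ℝ)
    (h1 : ∀ y ≤ (0:ℝ), |F y| ≤ (|y|^3 + y^2 + |y| + 1) * Real.exp (-y^2))
    (h2 : IntegrableOn F (Set.Ioc 0 2))
    (h3 : ∀ y ≥ (2:ℝ), |F y| ≤ c / y^2) : Integrable F := by
  rw [← integrableOn_univ, show (Set.univ : Set ℝ) = Set.Iic 0 ∪ Set.Ioi 0 from (Set.Iic_union_Ioi).symm]
  apply IntegrableOn.union
  · apply Integrable.mono' master_integrable.integrableOn (hm.restrict)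
    filter_upwards [ae_restrict_mem measurableSet_Iic] with y hy
    rw [Real.norm_eq_abs]
    exact h1 y hy
  · rw [show Set.Ioi (0:ℝ) = Set.Ioc 0 2 ∪ Set.Ioi 2 from (Set.Ioc_union_Ioi_eq_Ioi (by norm_num)).symm]
    apply IntegrableOn.union h2
    apply Integrable.mono' (tail_integrable c) (hm.restrict)
    filter_upwards [ae_restrict_mem measurableSet_Ioi] with y hy
    rw [Real.norm_eq_abs]
    exact h3 y (le_of_lt hy)

noncomputable def DD (y : ℝ) : ℝ :=
  y^3 * hh y - y^2 * (hh y)^2 - y * hh y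
    + Set.indicator (Set.Ioi (0:ℝ)) (fun y => 3/2 * y^2 + 1/4) y

lemma Gneg_hasDerivAt (y : ℝ) :
    HasDerivAt (fun u => -(u^2/2) * hh u) (y^3 * hh y - y^2 * (hh y)^2 - y * hh y) y := by
  have h1 : HasDerivAt (fun u : ℝ => -(u^2/2)) (-y) y := by
    have := ((hasDerivAt_pow 2 y).div_const 2).neg
    refine this.congr_deriv ?_; ring
  have := h1.mul (hh_hasDerivAt y)
  refine this.congr_deriv ?_; ring

lemma Gpos_hasDerivAt (y : ℝ) :
    HasDerivAt (fun u => -(u^2/2) * hh u + (u^3/2 + u/4))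
      (y^3 * hh y - y^2 * (hh y)^2 - y * hh y + (3/2 * y^2 + 1/4)) y := by
  have h1 : HasDerivAt (fun u : ℝ => u^3/2 + u/4) (3/2 * y^2 + 1/4) y := by
    have := ((hasDerivAt_pow 3 y).div_const 2).add ((hasDerivAt_id y).div_const 4)
    refine this.congr_deriv ?_; ring
  exact (Gneg_hasDerivAt y).add h1

lemma tendsto_sq_atBot : Tendsto (fun y : ℝ => y^2) atBot atTop := by
  have h := (tendsto_pow_atTop (two_ne_zero)).comp tendsto_neg_atBot_atTop (α := ℝ)
  refine h.congr fun y => ?_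
  simp [Function.comp, neg_sq]

lemma Gneg_tendsto : Tendsto (fun y : ℝ => -(y^2/2) * hh y) atBot (nhds 0) := by
  refine squeeze_zero_norm' (a := fun y : ℝ => y^2 * Real.exp (-y^2)) ?_ ?_
  · filter_upwards [eventually_le_atBot (0:ℝ)] with y hy
    have h1 := hh_pos y
    have h2 := hh_le_exp y hy
    rw [Real.norm_eq_abs, abs_mul, abs_of_pos h1, abs_neg, abs_div]
    have : |y ^ 2| = y ^ 2 := abs_of_nonneg (sq_nonneg y)
    rw [this]
    have : |(2:ℝ)| = 2 := by norm_num
    rw [this]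
    nlinarith [sq_nonneg y]
  · have h := (tendsto_pow_mul_exp_neg_atTop_nhds_zero 1).comp tendsto_sq_atBot
    refine h.congr fun y => ?_
    simp [Function.comp]

lemma Gpos_tendsto : Tendsto (fun y : ℝ => -(y^2/2) * hh y + (y^3/2 + y/4)) atTop (nhds 0) := by
  refine squeeze_zero_norm' (a := fun y : ℝ => 2 / y) ?_ ?_
  · filter_upwards [eventually_ge_atTop (2:ℝ)] with y hy
    have hy0 : (0:ℝ) < y := by linarith
    have h1 := hh_upper y hy
    have h2 := hh_lower y hy
    rw [Real.norm_eq_abs, abs_le]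
    have e1 : -(y^2/2) * ((2*y^6 + y^4 - y^2 + 16)/(2*y^5)) + (y^3/2 + y/4)
        = 1/(4*y) - 4/y^3 := by field_simp; ring
    have e2 : -(y^2/2) * ((2*y^6 + y^4 - y^2 - 16)/(2*y^5)) + (y^3/2 + y/4)
        = 1/(4*y) + 4/y^3 := by field_simp; ring
    have hm1 : -(y^2/2) * hh y + (y^3/2 + y/4) ≥ 1/(4*y) - 4/y^3 := by
      rw [← e1]
      have := mul_le_mul_of_nonpos_left h1 (by nlinarith : -(y^2/2) ≤ 0)
      linarith
    have hm2 : -(y^2/2) * hh y + (y^3/2 + y/4) ≤ 1/(4*y) + 4/y^3 := by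
      rw [← e2]
      have := mul_le_mul_of_nonpos_left h2 (by nlinarith : -(y^2/2) ≤ 0)
      linarith
    have hy3 : 4/y^3 ≤ 1/y := by
      rw [div_le_div_iff₀ (by positivity) hy0]
      nlinarith
    have hy4 : 1/(4*y) ≤ 1/y := by
      rw [div_le_div_iff₀ (by positivity) hy0]
      nlinarith
    have h2y : (2:ℝ)/y = 1/y + 1/y := by ring
    have h0 : (0:ℝ) < 1/(4*y) := by positivity
    constructor
    · linarith
    · linarith
  · exact tendsto_const_nhds.div_atTop tendsto_id

lemma DD_integral_Ioi (hint : IntegrableOn DD (Set.Ioi 0)) :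
    ∫ y in Set.Ioi (0:ℝ), DD y = 0 := by
  have hc : ContinuousWithinAt (fun u : ℝ => -(u^2/2) * hh u + (u^3/2 + u/4)) (Set.Ici 0) 0 := by
    apply Continuous.continuousWithinAt
    exact (((continuous_pow 2).div_const 2).neg.mul hh_cont).add
      (((continuous_pow 3).div_const 2).add (continuous_id.div_const 4))
  have hd : ∀ x ∈ Set.Ioi (0:ℝ),
      HasDerivAt (fun u : ℝ => -(u^2/2) * hh u + (u^3/2 + u/4)) (DD x) x := by
    intro x hx
    have hind : Set.indicator (Set.Ioi (0:ℝ)) (fun y => 3/2*y^2+1/4) x = 3/2*x^2+1/4 :=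
      Set.indicator_of_mem hx _
    rw [DD, hind]
    exact Gpos_hasDerivAt x
  have := integral_Ioi_of_hasDerivAt_of_tendsto hc hd hint Gpos_tendsto
  simpa using this

lemma DD_integral_Iic (hint : IntegrableOn DD (Set.Iic 0)) :
    ∫ y in Set.Iic (0:ℝ), DD y = 0 := by
  have hc : ContinuousWithinAt (fun u : ℝ => -(u^2/2) * hh u) (Set.Iic 0) 0 := by
    apply Continuous.continuousWithinAt
    exact ((continuous_pow 2).div_const 2).neg.mul hh_cont
  have hd : ∀ x ∈ Set.Iio (0:ℝ),
      HasDerivAt (fun u : ℝ => -(u^2/2) * hh u) (DD x) x := by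
    intro x hx
    have hind : Set.indicator (Set.Ioi (0:ℝ)) (fun y => 3/2*y^2+1/4) x = 0 :=
      Set.indicator_of_notMem (by simpa using le_of_lt hx) _
    rw [DD, hind, add_zero]
    exact Gneg_hasDerivAt x
  have := integral_Iic_of_hasDerivAt_of_tendsto hc hd hint Gneg_tendsto
  simpa using this
noncomputable def FF (y : ℝ) : ℝ :=
  y * hh y - Set.indicator (Set.Ioi (0:ℝ)) (fun y => y^2 + 1/2) y
noncomputable def F4 (y : ℝ) : ℝ :=
  (y * hh y)^2 - Set.indicator (Set.Ioi (0:ℝ)) (fun y => y^4 + y^2 - 3/4) y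
noncomputable def F2 (y : ℝ) : ℝ :=
  y^3 * hh y - Set.indicator (Set.Ioi (0:ℝ)) (fun y => y^4 + y^2/2 - 1/2) y

lemma F2_eq (y : ℝ) : F2 y = F4 y + FF y + DD y := by
  by_cases hy : y ∈ Set.Ioi (0:ℝ)
  · simp only [F2, F4, FF, DD, Set.indicator_of_mem hy]
    ring
  · simp only [F2, F4, FF, DD, Set.indicator_of_notMem hy]
    ring

section TailBounds

variable {y : ℝ} (hy : y ≥ (2:ℝ))

lemma z_facts (hy : y ≥ (2:ℝ)) :
    2*y^5 * hh y - (2*y^6+y^4-y^2) ≤ 16 ∧ -16 ≤ 2*y^5 * hh y - (2*y^6+y^4-y^2) := by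
  have hy0 : (0:ℝ) < y := by linarith
  have hy5 : (0:ℝ) < 2*y^5 := by positivity
  have h1 := hh_upper y hy
  have h2 := hh_lower y hy
  constructor
  · have := (le_div_iff₀ hy5).mp h1
    linarith
  · have := (div_le_iff₀ hy5).mp h2
    linarith

lemma FF_tail (hy : y ≥ (2:ℝ)) : |FF y| ≤ 5 / y^2 := by
  have hy0 : (0:ℝ) < y := by linarith
  have hy2 : (4:ℝ) ≤ y^2 := by nlinarith
  obtain ⟨hz1, hz2⟩ := z_facts hy
  have hmem : y ∈ Set.Ioi (0:ℝ) := hy0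
  have key : FF y = (2*y^5 * hh y - (2*y^6+y^4-y^2)) / (2*y^4) - 1/(2*y^2) := by
    rw [FF, Set.indicator_of_mem hmem]
    field_simp
    ring
  rw [key, abs_le]
  set z := 2*y^5 * hh y - (2*y^6+y^4-y^2) with hzdef
  have e1 : z / (2*y^4) ≤ 16 / (2*y^4) := by
    apply div_le_div_of_nonneg_right hz1 (by positivity) |>.trans_eq rfl
  have e2 : (-16:ℝ) / (2*y^4) ≤ z / (2*y^4) := by
    apply div_le_div_of_nonneg_right hz2 (by positivity) |>.trans_eq rfl
  have d1 : (16:ℝ) / (2*y^4) ≤ 2 / y^2 := by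
    rw [div_le_div_iff₀ (by positivity) (by positivity)]
    nlinarith
  have d2 : (1:ℝ)/(2*y^2) ≤ 1 / y^2 := by
    rw [div_le_div_iff₀ (by positivity) (by positivity)]
    nlinarith
  have d3 : (0:ℝ) < 1/(2*y^2) := by positivity
  have d4 : (2:ℝ)/y^2 + 1/y^2 ≤ 5/y^2 := by
    rw [← add_div, div_le_div_iff₀ (by positivity) (by positivity)]
    nlinarith
  have d5 : (0:ℝ) ≤ 2 / y^2 := by positivity
  have d6 : (0:ℝ) < 1/y^2 := by positivity
  have h5 : -(5/y^2) = -(2/y^2) - 3/y^2 := by ring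
  have h6 : (1:ℝ)/(2*y^2) ≤ 3/y^2 := by
    rw [div_le_div_iff₀ (by positivity) (by positivity)]; nlinarith
  have hne : -16/(2*y^4) = -(16/(2*y^4)) := by ring
  have e2' : -(2/y^2) ≤ z / (2*y^4) := by linarith
  constructor
  · linarith
  · linarith

lemma F4_tail (hy : y ≥ (2:ℝ)) : |F4 y| ≤ 30 / y^2 := by
  have hy0 : (0:ℝ) < y := by linarith
  have hy2 : (4:ℝ) ≤ y^2 := by nlinarith
  obtain ⟨hz1, hz2⟩ := z_facts hy
  have hmem : y ∈ Set.Ioi (0:ℝ) := hy0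
  set z := 2*y^5 * hh y - (2*y^6+y^4-y^2) with hzdef
  have hhy : hh y = (2*y^6+y^4-y^2+z)/(2*y^5) := by
    rw [hzdef]
    field_simp
    ring
  have key : F4 y = (z^2 - 2*y^2*z + y^4 + 2*y^4*z - 2*y^6 + 4*y^6*z) / (4*y^8) := by
    rw [F4, Set.indicator_of_mem hmem, hhy]
    field_simp
    ring
  have hnum : |z^2 - 2*y^2*z + y^4 + 2*y^4*z - 2*y^6 + 4*y^6*z| ≤ 120 * y^6 := by
    have hy4 : (16:ℝ) ≤ y^4 := by nlinarith
    have hy6 : (64:ℝ) ≤ y^6 := by nlinarith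
    have hz16 : |z| ≤ 16 := abs_le.mpr ⟨by linarith, by linarith⟩
    have hzsq : z^2 ≤ 256 := by nlinarith [abs_nonneg z, sq_abs z]
    have h1 : 4*y^2 ≤ y^4 := by nlinarith [sq_nonneg y]
    have h2 : 4*y^4 ≤ y^6 := by nlinarith [pow_nonneg hy0.le 4]
    rw [abs_le]
    constructor <;> nlinarith [abs_le.mp hz16, mul_le_mul_of_nonneg_left (abs_le.mp hz16).2 (by positivity : (0:ℝ) ≤ y^2), mul_le_mul_of_nonneg_left (abs_le.mp hz16).2 (by positivity : (0:ℝ) ≤ y^4), mul_le_mul_of_nonneg_left (abs_le.mp hz16).2 (by positivity : (0:ℝ) ≤ y^6), neg_abs_le z, le_abs_self z, mul_le_mul_of_nonneg_left (neg_abs_le z) (by positivity : (0:ℝ) ≤ y^2)]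
  rw [key, abs_div, abs_of_pos (show (0:ℝ) < 4*y^8 by positivity),
    div_le_div_iff₀ (by positivity) (by positivity)]
  calc |z^2 - 2*y^2*z + y^4 + 2*y^4*z - 2*y^6 + 4*y^6*z| * y^2 ≤ (120*y^6) * y^2 :=
        mul_le_mul_of_nonneg_right hnum (by positivity)
    _ = 30 * (4*y^8) := by ring

lemma DD_tail (hy : y ≥ (2:ℝ)) : |DD y| ≤ 30 / y^2 := by
  have hy0 : (0:ℝ) < y := by linarith
  have hy2 : (4:ℝ) ≤ y^2 := by nlinarith
  obtain ⟨hz1, hz2⟩ := z_facts hy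
  have hmem : y ∈ Set.Ioi (0:ℝ) := hy0
  set z := 2*y^5 * hh y - (2*y^6+y^4-y^2) with hzdef
  have hhy : hh y = (2*y^6+y^4-y^2+z)/(2*y^5) := by
    rw [hzdef]
    field_simp
    ring
  have key : DD y = (-z^2 + 2*y^2*z - y^4 - 4*y^4*z + 4*y^6 - 2*y^6*z) / (4*y^8) := by
    rw [DD, Set.indicator_of_mem hmem, hhy]
    field_simp
    ring
  have hnum : |-z^2 + 2*y^2*z - y^4 - 4*y^4*z + 4*y^6 - 2*y^6*z| ≤ 120 * y^6 := by
    have hy4 : (16:ℝ) ≤ y^4 := by nlinarith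
    have hy6 : (64:ℝ) ≤ y^6 := by nlinarith
    have hz16 : |z| ≤ 16 := abs_le.mpr ⟨by linarith, by linarith⟩
    have hzsq : z^2 ≤ 256 := by nlinarith [abs_nonneg z, sq_abs z]
    have h1 : 4*y^2 ≤ y^4 := by nlinarith [sq_nonneg y]
    have h2 : 4*y^4 ≤ y^6 := by nlinarith [pow_nonneg hy0.le 4]
    rw [abs_le]
    constructor <;> nlinarith [sq_nonneg z, mul_le_mul_of_nonneg_left (abs_le.mp hz16).2 (by positivity : (0:ℝ) ≤ y^2), mul_le_mul_of_nonneg_left (abs_le.mp hz16).2 (by positivity : (0:ℝ) ≤ y^4), mul_le_mul_of_nonneg_left (abs_le.mp hz16).2 (by positivity : (0:ℝ) ≤ y^6), neg_abs_le z, le_abs_self z, mul_le_mul_of_nonneg_left (neg_abs_le z) (by positivity : (0:ℝ) ≤ y^2), mul_le_mul_of_nonneg_left (neg_abs_le z) (by positivity : (0:ℝ) ≤ y^4), mul_le_mul_of_nonneg_left (neg_abs_le z) (by positivity : (0:ℝ) ≤ y^6)]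
  rw [key, abs_div, abs_of_pos (show (0:ℝ) < 4*y^8 by positivity),
    div_le_div_iff₀ (by positivity) (by positivity)]
  calc |-z^2 + 2*y^2*z - y^4 - 4*y^4*z + 4*y^6 - 2*y^6*z| * y^2 ≤ (120*y^6) * y^2 :=
        mul_le_mul_of_nonneg_right hnum (by positivity)
    _ = 30 * (4*y^8) := by ring

end TailBounds

lemma not_mem_Ioi_of_nonpos {y : ℝ} (hy : y ≤ 0) : y ∉ Set.Ioi (0:ℝ) := by
  simpa using hy

lemma FF_integrable : Integrable FF := by
  have hmeas : AEStronglyMeasurable FF volume := by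
    apply Measurable.aestronglyMeasurable
    apply Measurable.sub
    · exact (continuous_id.mul hh_cont).measurable
    · exact Measurable.indicator (by fun_prop) measurableSet_Ioi
  apply integrable_of_three hmeas 5
  · intro y hy
    rw [FF, Set.indicator_of_notMem (not_mem_Ioi_of_nonpos hy), sub_zero, abs_mul,
      abs_of_pos (hh_pos y)]
    have h1 := hh_le_exp y hy
    have h2 := hh_pos y
    have h3 := Real.exp_pos (-y^2)
    nlinarith [abs_nonneg y, sq_nonneg y, pow_nonneg (abs_nonneg y) 3,
      mul_le_mul_of_nonneg_left h1 (abs_nonneg y)]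
  · have hcont : Continuous (fun y : ℝ => y * hh y - (y^2 + 1/2)) :=
      (continuous_id.mul hh_cont).sub (by continuity)
    refine IntegrableOn.congr_fun
      ((hcont.integrableOn_Icc (a := 0) (b := 2)).mono_set Set.Ioc_subset_Icc_self)
      (fun x hx => ?_) measurableSet_Ioc
    rw [FF, Set.indicator_of_mem (show x ∈ Set.Ioi (0:ℝ) from hx.1)]
  · exact fun y hy => FF_tail hy

lemma F4_integrable : Integrable F4 := by
  have hmeas : AEStronglyMeasurable F4 volume := by
    apply Measurable.aestronglyMeasurable
    apply Measurable.sub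
    · exact ((continuous_id.mul hh_cont).pow 2).measurable
    · exact Measurable.indicator (by fun_prop) measurableSet_Ioi
  apply integrable_of_three hmeas 30
  · intro y hy
    rw [F4, Set.indicator_of_notMem (not_mem_Ioi_of_nonpos hy), sub_zero]
    have h1 := hh_le_exp y hy
    have h2 := hh_pos y
    have h3 := Real.exp_pos (-y^2)
    have h4 : Real.exp (-y^2) ≤ 1 := Real.exp_le_one_iff.mpr (by nlinarith [sq_nonneg y])
    have h5 : (y * hh y)^2 = y^2 * (hh y)^2 := by ring
    rw [abs_of_nonneg (sq_nonneg _), h5]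
    have h6 : (hh y)^2 ≤ Real.exp (-y^2) := by nlinarith
    nlinarith [abs_nonneg y, sq_nonneg y, pow_nonneg (abs_nonneg y) 3,
      mul_le_mul_of_nonneg_left h6 (sq_nonneg y)]
  · have hcont : Continuous (fun y : ℝ => (y * hh y)^2 - (y^4 + y^2 - 3/4)) :=
      ((continuous_id.mul hh_cont).pow 2).sub (by continuity)
    refine IntegrableOn.congr_fun
      ((hcont.integrableOn_Icc (a := 0) (b := 2)).mono_set Set.Ioc_subset_Icc_self)
      (fun x hx => ?_) measurableSet_Ioc
    rw [F4, Set.indicator_of_mem (show x ∈ Set.Ioi (0:ℝ) from hx.1)]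
  · exact fun y hy => F4_tail hy

lemma DD_integrable : Integrable DD := by
  have hmeas : AEStronglyMeasurable DD volume := by
    apply Measurable.aestronglyMeasurable
    apply Measurable.add
    · apply Measurable.sub
      · apply Measurable.sub
        · exact ((continuous_pow 3).mul hh_cont).measurable
        · exact ((continuous_pow 2).mul (hh_cont.pow 2)).measurable
      · exact (continuous_id.mul hh_cont).measurable
    · exact Measurable.indicator (by fun_prop) measurableSet_Ioi
  apply integrable_of_three hmeas 30
  · intro y hy
    rw [DD, Set.indicator_of_notMem (not_mem_Ioi_of_nonpos hy), add_zero]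
    have h1 := hh_le_exp y hy
    have h2 := hh_pos y
    have h3 := Real.exp_pos (-y^2)
    have h4 : Real.exp (-y^2) ≤ 1 := Real.exp_le_one_iff.mpr (by nlinarith [sq_nonneg y])
    have h6 : (hh y)^2 ≤ Real.exp (-y^2) := by nlinarith
    have t1 : |y^3 * hh y| = |y|^3 * hh y := by
      rw [abs_mul, abs_pow, abs_of_pos h2]
    have t2 : |y^2 * (hh y)^2| = y^2 * (hh y)^2 := abs_of_nonneg (by positivity)
    have t3 : |y * hh y| = |y| * hh y := by
      rw [abs_mul, abs_of_pos h2]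
    have tri : |y^3 * hh y - y^2 * (hh y)^2 - y * hh y|
        ≤ |y^3 * hh y| + |y^2 * (hh y)^2| + |y * hh y| := by
      calc |y^3 * hh y - y^2 * (hh y)^2 - y * hh y|
          ≤ |y^3 * hh y - y^2 * (hh y)^2| + |y * hh y| := abs_sub _ _
        _ ≤ |y^3 * hh y| + |y^2 * (hh y)^2| + |y * hh y| := by
            linarith [abs_sub (y^3 * hh y) (y^2 * (hh y)^2)]
    rw [t1, t2, t3] at tri
    have b1 : |y|^3 * hh y ≤ |y|^3 * Real.exp (-y^2) :=
      mul_le_mul_of_nonneg_left h1 (by positivity)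
    have b2 : y^2 * (hh y)^2 ≤ y^2 * Real.exp (-y^2) :=
      mul_le_mul_of_nonneg_left h6 (sq_nonneg y)
    have b3 : |y| * hh y ≤ |y| * Real.exp (-y^2) :=
      mul_le_mul_of_nonneg_left h1 (abs_nonneg y)
    nlinarith [tri]
  · have hcont : Continuous (fun y : ℝ =>
        y^3 * hh y - y^2 * (hh y)^2 - y * hh y + (3/2 * y^2 + 1/4)) := by
      refine Continuous.add ?_ (by continuity)
      exact (((continuous_pow 3).mul hh_cont).sub
        ((continuous_pow 2).mul (hh_cont.pow 2))).sub (continuous_id.mul hh_cont)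
    refine IntegrableOn.congr_fun
      ((hcont.integrableOn_Icc (a := 0) (b := 2)).mono_set Set.Ioc_subset_Icc_self)
      (fun x hx => ?_) measurableSet_Ioc
    rw [DD, Set.indicator_of_mem (show x ∈ Set.Ioi (0:ℝ) from hx.1)]
  · exact fun y hy => DD_tail hy

lemma DD_integral_zero : ∫ y : ℝ, DD y = 0 := by
  have h := intervalIntegral.integral_Iic_add_Ioi (b := (0:ℝ)) (μ := volume) (f := DD)
    DD_integrable.integrableOn DD_integrable.integrableOn
  rw [DD_integral_Iic DD_integrable.integrableOn, DD_integral_Ioi DD_integrable.integrableOn,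
    add_zero] at h
  exact h.symm

theorem I2_sub_I4_eq_I :
    (∫ y : ℝ,
        (y ^ 3 * Real.exp (-y ^ 2) / (Real.sqrt Real.pi * erfc y)
          - Set.indicator (Set.Ioi (0 : ℝ)) (fun y => y ^ 4 + y ^ 2 / 2 - 1 / 2) y))
      - (∫ y : ℝ,
        ((y * Real.exp (-y ^ 2) / (Real.sqrt Real.pi * erfc y)) ^ 2
          - Set.indicator (Set.Ioi (0 : ℝ)) (fun y => y ^ 4 + y ^ 2 - 3 / 4) y))
      = ∫ y : ℝ,
        (y * Real.exp (-y ^ 2) / (Real.sqrt Real.pi * erfc y)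
          - Set.indicator (Set.Ioi (0 : ℝ)) (fun y => y ^ 2 + 1 / 2) y) := by
  have e2 : (fun y : ℝ => y ^ 3 * Real.exp (-y ^ 2) / (Real.sqrt Real.pi * erfc y)
      - Set.indicator (Set.Ioi (0 : ℝ)) (fun y => y ^ 4 + y ^ 2 / 2 - 1 / 2) y) = F2 := by
    funext y
    rw [F2, hh, mul_div_assoc]
  have e4 : (fun y : ℝ => (y * Real.exp (-y ^ 2) / (Real.sqrt Real.pi * erfc y)) ^ 2
      - Set.indicator (Set.Ioi (0 : ℝ)) (fun y => y ^ 4 + y ^ 2 - 3 / 4) y) = F4 := by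
    funext y
    rw [F4, hh, mul_div_assoc]
  have e1 : (fun y : ℝ => y * Real.exp (-y ^ 2) / (Real.sqrt Real.pi * erfc y)
      - Set.indicator (Set.Ioi (0 : ℝ)) (fun y => y ^ 2 + 1 / 2) y) = FF := by
    funext y
    rw [FF, hh, mul_div_assoc]
  rw [e2, e4, e1]
  have hsplit : (fun y : ℝ => F2 y) = fun y => F4 y + (FF y + DD y) := by
    funext y
    rw [F2_eq]
    ring
  have hFD : Integrable (fun y => FF y + DD y) := FF_integrable.add DD_integrable
  calc (∫ y : ℝ, F2 y) - ∫ y : ℝ, F4 y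
      = (∫ y : ℝ, (F4 y + (FF y + DD y))) - ∫ y : ℝ, F4 y := by rw [← hsplit]
    _ = ((∫ y : ℝ, F4 y) + ∫ y : ℝ, (FF y + DD y)) - ∫ y : ℝ, F4 y := by
        rw [integral_add F4_integrable hFD]
    _ = ∫ y : ℝ, (FF y + DD y) := by ring
    _ = (∫ y : ℝ, FF y) + ∫ y : ℝ, DD y := integral_add FF_integrable DD_integrable
    _ = ∫ y : ℝ, FF y := by rw [DD_integral_zero, add_zero]
end
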